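/- arXiv:1711.11560 — 11 statements merged into one kernel-verified Lean document; each statement's English description precedes it below -/
import Mathlib

section
/- Let p be a probability distribution on X × Y × Z (finite sets) and ε ≥ 0. Suppose there exists a conditionally independent distribution p' on X × Y × Z with d_TV(p, p') ≤ ε. Define q on X × Y × Z by q(i,j,z) := p_Z(z) · p_{z,X}(i) · p_{z,Y}(j). Then d_TV(p, q) ≤ 4ε. -/
/-!
Write `a(i,z)`, `b(j,z)`, `M(z)` for the `(X,Z)`-, `(Y,Z)`- and `Z`-marginals of `p`. Then
`q = a · b / M`, and a conditionally independent `p'` satisfies `p' = a' · b' / M'` in the same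
way. For fixed `z`, splitting `a b / M - a' b' / M' = (a - a') (b / M) + a' (b / M - b' / M')`
bounds the `ℓ¹` distance of the two products by `‖a - a'‖₁ + 2 ‖b - b'‖₁`, and both marginal
distances are at most `‖p - p'‖₁`. Hence `‖p' - q‖₁ ≤ 3 ‖p - p'‖₁`, and the triangle inequality
through `p'` gives `‖p - q‖₁ ≤ 4 ‖p - p'‖₁`.
-/

open Finset

/-- Total variation distance between two functions on a finite type. -/
noncomputable def dTV {Ω : Type*} [Fintype Ω] (p q : Ω → ℝ) : ℝ :=
  (1 / 2) * ∑ ω, |p ω - q ω|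

/-- The `Z`-marginal of a distribution on `X × Y × Z`. -/
noncomputable def margZ {X Y Z : Type*} [Fintype X] [Fintype Y]
    (p : X × Y × Z → ℝ) (z : Z) : ℝ :=
  ∑ i, ∑ j, p (i, j, z)

/-- The conditional distribution on `X × Y` given `Z = z` (division by zero yields 0). -/
noncomputable def condZ {X Y Z : Type*} [Fintype X] [Fintype Y]
    (p : X × Y × Z → ℝ) (z : Z) : X × Y → ℝ :=
  fun ij => p (ij.1, ij.2, z) / margZ p z

lemma dTV_comm {Ω : Type*} [Fintype Ω] (p q : Ω → ℝ) : dTV p q = dTV q p := by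
  simp only [dTV, abs_sub_comm]

lemma dTV_triangle {Ω : Type*} [Fintype Ω] (p q r : Ω → ℝ) :
    dTV p r ≤ dTV p q + dTV q r := by
  simp only [dTV, ← mul_add, ← sum_add_distrib]
  gcongr with ω
  exact abs_sub_le _ _ _

lemma abs_sum_sub_sum_le {ι G : Type*} [AddCommGroup G] [LinearOrder G] [IsOrderedAddMonoid G]
    (s : Finset ι) (f g : ι → G) :
    |∑ i ∈ s, f i - ∑ i ∈ s, g i| ≤ ∑ i ∈ s, |f i - g i| := by
  rw [← sum_sub_distrib]
  exact abs_sum_le_sum_abs _ _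

section Normalized

variable {ι : Type*} [Fintype ι]

noncomputable def normalized (b : ι → ℝ) (j : ι) : ℝ :=
  b j / ∑ k, b k

lemma sum_normalized_le_one (b : ι → ℝ) : ∑ j, normalized b j ≤ 1 := by
  simp only [normalized, ← sum_div]
  exact div_self_le_one _

variable {b b' : ι → ℝ}

lemma normalized_nonneg (hb : ∀ j, 0 ≤ b j) (j : ι) : 0 ≤ normalized b j :=
  div_nonneg (hb j) (sum_nonneg fun k _ => hb k)

lemma sum_mul_normalized (hb : ∀ j, 0 ≤ b j) (j : ι) : (∑ k, b k) * normalized b j = b j := by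
  rcases eq_or_ne (∑ k, b k) 0 with h | h
  · rw [h, zero_mul, (sum_eq_zero_iff_of_nonneg fun k _ => hb k).mp h j (mem_univ j)]
  · exact mul_div_cancel₀ _ h

lemma sum_mul_sum_abs_normalized_sub_le (hb : ∀ j, 0 ≤ b j) (hb' : ∀ j, 0 ≤ b' j) :
    (∑ k, b' k) * ∑ j, |normalized b j - normalized b' j| ≤ 2 * ∑ j, |b j - b' j| := by
  set S := ∑ k, b k
  set S' := ∑ k, b' k
  have hpt : ∀ j, S' * |normalized b j - normalized b' j| ≤
      |S - S'| * normalized b j + |b j - b' j| := by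
    intro j
    have hS' : 0 ≤ S' := sum_nonneg fun k _ => hb' k
    calc S' * |normalized b j - normalized b' j|
        = |S' * (normalized b j - normalized b' j)| := by rw [abs_mul, abs_of_nonneg hS']
      _ = |(S' - S) * normalized b j + (S * normalized b j - S' * normalized b' j)| := by
          congr 1; ring
      _ ≤ |S - S'| * normalized b j + |b j - b' j| := by
          grw [abs_add_le, abs_mul, abs_sub_comm, abs_of_nonneg (normalized_nonneg hb j),
            sum_mul_normalized hb, sum_mul_normalized hb']
  calc S' * ∑ j, |normalized b j - normalized b' j|
      ≤ ∑ j, (|S - S'| * normalized b j + |b j - b' j|) := by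
        rw [mul_sum]; exact sum_le_sum fun j _ => hpt j
    _ = |S - S'| * ∑ j, normalized b j + ∑ j, |b j - b' j| := by
        rw [sum_add_distrib, mul_sum]
    _ ≤ |S - S'| * 1 + ∑ j, |b j - b' j| := by
        gcongr; exact sum_normalized_le_one b
    _ ≤ 2 * ∑ j, |b j - b' j| := by
        linarith [abs_sum_sub_sum_le univ b b']

lemma sum_sum_abs_mul_normalized_sub_le {κ : Type*} [Fintype κ] {a a' : κ → ℝ}
    (ha' : ∀ i, 0 ≤ a' i) (hb : ∀ j, 0 ≤ b j) (hb' : ∀ j, 0 ≤ b' j)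
    (hsum : ∑ i, a' i = ∑ j, b' j) :
    ∑ i, ∑ j, |a i * normalized b j - a' i * normalized b' j| ≤
      ∑ i, |a i - a' i| + 2 * ∑ j, |b j - b' j| := by
  have hpt : ∀ i j, |a i * normalized b j - a' i * normalized b' j| ≤
      |a i - a' i| * normalized b j + a' i * |normalized b j - normalized b' j| := by
    intro i j
    calc |a i * normalized b j - a' i * normalized b' j|
        = |(a i - a' i) * normalized b j + a' i * (normalized b j - normalized b' j)| := by
          congr 1; ring
      _ ≤ _ := by
          grw [abs_add_le, abs_mul, abs_mul, abs_of_nonneg (normalized_nonneg hb j),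
            abs_of_nonneg (ha' i)]
  calc ∑ i, ∑ j, |a i * normalized b j - a' i * normalized b' j|
      ≤ ∑ i, ∑ j, (|a i - a' i| * normalized b j + a' i * |normalized b j - normalized b' j|) :=
        sum_le_sum fun i _ => sum_le_sum fun j _ => hpt i j
    _ = (∑ i, |a i - a' i|) * ∑ j, normalized b j +
          (∑ i, a' i) * ∑ j, |normalized b j - normalized b' j| := by
        simp only [sum_add_distrib, ← mul_sum, ← sum_mul]
    _ ≤ (∑ i, |a i - a' i|) * 1 + 2 * ∑ j, |b j - b' j| := by
        rw [hsum]
        have hdiff : 0 ≤ ∑ i, |a i - a' i| := sum_nonneg fun i _ => abs_nonneg _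
        exact add_le_add (mul_le_mul_of_nonneg_left (sum_normalized_le_one b) hdiff)
          (sum_mul_sum_abs_normalized_sub_le hb hb')
    _ = ∑ i, |a i - a' i| + 2 * ∑ j, |b j - b' j| := by rw [mul_one]

end Normalized

section CondIndep

variable {X Y Z : Type*} [Fintype X] [Fintype Y]

noncomputable def margXZ (f : X × Y × Z → ℝ) (i : X) (z : Z) : ℝ :=
  ∑ j, f (i, j, z)

noncomputable def margYZ (f : X × Y × Z → ℝ) (j : Y) (z : Z) : ℝ :=
  ∑ i, f (i, j, z)

noncomputable def condIndepProj (f : X × Y × Z → ℝ) (ω : X × Y × Z) : ℝ :=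
  margXZ f ω.1 ω.2.2 * normalized (margYZ f · ω.2.2) ω.2.1

lemma sum_margXZ (f : X × Y × Z → ℝ) (z : Z) : ∑ i, margXZ f i z = margZ f z := rfl

lemma sum_margYZ (f : X × Y × Z → ℝ) (z : Z) : ∑ j, margYZ f j z = margZ f z :=
  sum_comm

lemma margZ_mul_condZ_marginals_eq_condIndepProj (f : X × Y × Z → ℝ) :
    (fun ω => margZ f ω.2.2 * ((∑ j, condZ f ω.2.2 (ω.1, j)) *
      (∑ i, condZ f ω.2.2 (i, ω.2.1)))) = condIndepProj f := by
  ext ⟨i, j, z⟩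
  simp only [condIndepProj, normalized, sum_margYZ]
  simp only [margXZ, margYZ, condZ, ← sum_div]
  rcases eq_or_ne (margZ f z) 0 with h | h
  · simp [h]
  · field_simp

lemma condIndepProj_eq_self {f : X × Y × Z → ℝ} (hf0 : ∀ ω, 0 ≤ f ω)
    (hf : ∀ i j z, f (i, j, z) * margZ f z = margXZ f i z * margYZ f j z) :
    condIndepProj f = f := by
  ext ⟨i, j, z⟩
  simp only [condIndepProj, normalized, sum_margYZ]
  rcases eq_or_ne (margZ f z) 0 with h | h
  · have hi : margXZ f i z = 0 :=
      (sum_eq_zero_iff_of_nonneg fun i _ => sum_nonneg fun j _ => hf0 _).mp h i (mem_univ i)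
    rw [hi, zero_mul, (sum_eq_zero_iff_of_nonneg fun j _ => hf0 _).mp hi j (mem_univ j)]
  · rw [← mul_div_assoc, ← hf, mul_div_cancel_right₀ _ h]

lemma sum_triple_eq_sum_sum_sum [Fintype Z] (g : X × Y × Z → ℝ) :
    ∑ ω, g ω = ∑ z, ∑ i, ∑ j, g (i, j, z) := by
  rw [Fintype.sum_prod_type]
  simp_rw [Fintype.sum_prod_type_right]
  exact sum_comm

lemma sum_abs_margXZ_sub_le [Fintype Z] (f g : X × Y × Z → ℝ) :
    ∑ z, ∑ i, |margXZ f i z - margXZ g i z| ≤ ∑ ω, |f ω - g ω| := by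
  rw [sum_triple_eq_sum_sum_sum]
  gcongr with z _ i _
  exact abs_sum_sub_sum_le _ _ _

lemma sum_abs_margYZ_sub_le [Fintype Z] (f g : X × Y × Z → ℝ) :
    ∑ z, ∑ j, |margYZ f j z - margYZ g j z| ≤ ∑ ω, |f ω - g ω| := by
  rw [sum_triple_eq_sum_sum_sum]
  gcongr with z _
  rw [sum_comm]
  gcongr with j _
  exact abs_sum_sub_sum_le _ _ _

lemma dTV_condIndepProj_le [Fintype Z] {f g : X × Y × Z → ℝ} (hf0 : ∀ ω, 0 ≤ f ω)
    (hg0 : ∀ ω, 0 ≤ g ω) : dTV (condIndepProj f) (condIndepProj g) ≤ 3 * dTV f g := by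
  have hslice : ∀ z, ∑ i, ∑ j, |condIndepProj f (i, j, z) - condIndepProj g (i, j, z)| ≤
      ∑ i, |margXZ f i z - margXZ g i z| + 2 * ∑ j, |margYZ f j z - margYZ g j z| :=
    fun z => sum_sum_abs_mul_normalized_sub_le (a := (margXZ f · z)) (a' := (margXZ g · z))
      (b := (margYZ f · z)) (b' := (margYZ g · z)) (fun i => sum_nonneg fun j _ => hg0 _)
      (fun j => sum_nonneg fun i _ => hf0 _) (fun j => sum_nonneg fun i _ => hg0 _) (by rw [sum_margXZ, sum_margYZ])
  have hsum : ∑ ω, |condIndepProj f ω - condIndepProj g ω| ≤ 3 * ∑ ω, |f ω - g ω| := by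
    rw [sum_triple_eq_sum_sum_sum]
    grw [sum_le_sum fun z _ => hslice z, sum_add_distrib, ← mul_sum, sum_abs_margXZ_sub_le,
      sum_abs_margYZ_sub_le]
    linarith
  simp only [dTV]
  linarith

end CondIndep

theorem stmt1_general {X Y Z : Type*} [Fintype X] [Fintype Y] [Fintype Z]
    (p : X × Y × Z → ℝ) (hp0 : ∀ ω, 0 ≤ p ω)
    (ε : ℝ)
    (h : ∃ p' : X × Y × Z → ℝ, (∀ ω, 0 ≤ p' ω) ∧ (∑ ω, p' ω = 1) ∧
      (∀ i j z, p' (i, j, z) * margZ p' z =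
        (∑ j', p' (i, j', z)) * (∑ i', p' (i', j, z))) ∧
      dTV p p' ≤ ε) :
    dTV p (fun ω => margZ p ω.2.2 * ((∑ j, condZ p ω.2.2 (ω.1, j)) *
      (∑ i, condZ p ω.2.2 (i, ω.2.1)))) ≤ 4 * ε := by
  obtain ⟨p', hp'0, -, hp'CI, hd⟩ := h
  rw [margZ_mul_condZ_marginals_eq_condIndepProj]
  calc dTV p (condIndepProj p) ≤ dTV p p' + dTV p' (condIndepProj p) := dTV_triangle _ _ _
    _ = dTV p p' + dTV (condIndepProj p) (condIndepProj p') := by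
        rw [condIndepProj_eq_self hp'0 hp'CI, dTV_comm p']
    _ ≤ dTV p p' + 3 * dTV p p' := by grw [dTV_condIndepProj_le hp0 hp'0]
    _ ≤ 4 * ε := by linarith

theorem stmt1 {X Y Z : Type*} [Fintype X] [Fintype Y] [Fintype Z]
    (p : X × Y × Z → ℝ) (hp0 : ∀ ω, 0 ≤ p ω) (hp1 : ∑ ω, p ω = 1)
    (ε : ℝ) (hε : 0 ≤ ε)
    (h : ∃ p' : X × Y × Z → ℝ, (∀ ω, 0 ≤ p' ω) ∧ (∑ ω, p' ω = 1) ∧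
      (∀ i j z, p' (i, j, z) * margZ p' z =
        (∑ j', p' (i, j', z)) * (∑ i', p' (i', j, z))) ∧
      dTV p p' ≤ ε) :
    dTV p (fun ω => margZ p ω.2.2 * ((∑ j, condZ p ω.2.2 (ω.1, j)) *
      (∑ i, condZ p ω.2.2 (i, ω.2.1)))) ≤ 4 * ε :=
  stmt1_general p hp0 ε h
end

section
/- Let p be a probability distribution on [n] = {1,…,n} and let m ∈ ℕ. For a tuple (s_1,…,s_m) ∈ [n]^m, define a_i := 1 + #{j ∈ [m] : s_j = i} for each i ∈ [n]. Then the expectation, over (s_1,…,s_m) drawn from the m-fold product of p, of ∑_{i=1}^n p_i² / a_i is at most 1/(m+1). -/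
/-! Since `p i ^ 2 / a i = p i * (p i / a i)`, it suffices to bound, for each `i`, the expectation
of `p i / (1 + #{j | s j = i})` by `1 / (m + 1)`. Adding one more sample `t none` turns it into
the expectation of `[t none = i] / #{j | t j = i}` over `m + 1` samples. The samples are
exchangeable, so this is `1 / (m + 1)` times the expectation of
`∑ k, [t k = i] / #{j | t j = i}`, which is `1` if `i` occurs in `t` and `0` otherwise. -/

open Finset

theorem card_filter_comp_perm {ι α : Type*} [Fintype ι] [DecidableEq α] (t : ι → α)
    (σ : Equiv.Perm ι) (a : α) : #{j | t (σ j) = a} = #{j | t j = a} := by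
  simp only [card_filter]
  exact Equiv.sum_comp σ fun j => if t j = a then 1 else 0

theorem card_filter_option {ι α : Type*} [Fintype ι] [DecidableEq α] (t : Option ι → α) (a : α) :
    #{j | t j = a} = (if t none = a then 1 else 0) + #{j | t (some j) = a} := by
  simp only [card_filter, Fintype.sum_option]

section

variable {ι α : Type*} [Fintype ι] [DecidableEq ι] [Fintype α]

theorem sum_prod_apply_eq_one {p : α → ℝ} (hp1 : ∑ a, p a = 1) :
    ∑ t : ι → α, ∏ j, p (t j) = 1 := by
  rw [← Fintype.prod_sum (fun _ => p)]
  simp [hp1]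

variable [DecidableEq α]

theorem sum_prod_mul_ite_div_card_filter_eq (p : α → ℝ) (a : α) (k k' : ι) :
    ∑ t : ι → α, (∏ j, p (t j)) * (if t k = a then 1 else 0) / #{j | t j = a}
      = ∑ t : ι → α, (∏ j, p (t j)) * (if t k' = a then 1 else 0) / #{j | t j = a} := by
  set σ := Equiv.swap k k'
  refine Fintype.sum_bijective (· ∘ σ) σ.bijective.comp_right _ _ fun t => ?_
  simp only [Function.comp_apply, card_filter_comp_perm, σ, Equiv.swap_apply_right]
  rw [Equiv.prod_comp σ fun j => p (t j)]

theorem card_mul_sum_prod_mul_ite_div_card_filter_le_one {p : α → ℝ}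
    (hp0 : ∀ a, 0 ≤ p a) (hp1 : ∑ a, p a = 1) (a : α) (k : ι) :
    Fintype.card ι * ∑ t : ι → α, (∏ j, p (t j)) * (if t k = a then 1 else 0) / #{j | t j = a}
      ≤ 1 := by
  calc _ = ∑ k' : ι, ∑ t : ι → α,
          (∏ j, p (t j)) * (if t k' = a then 1 else 0) / #{j | t j = a} := by
        rw [sum_congr rfl fun k' _ => sum_prod_mul_ite_div_card_filter_eq p a k' k, sum_const,
          card_univ, nsmul_eq_mul]
    _ = ∑ t : ι → α, (∏ j, p (t j)) * ((#{j | t j = a} : ℝ) / #{j | t j = a}) := by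
        rw [sum_comm]
        refine sum_congr rfl fun t _ => ?_
        simp only [mul_div_assoc, ← mul_sum, ← sum_div, card_filter]
        push_cast; rfl
    _ ≤ ∑ t : ι → α, ∏ j, p (t j) :=
        sum_le_sum fun t _ =>
          mul_le_of_le_one_right (prod_nonneg fun j _ => hp0 (t j)) (div_self_le_one _)
    _ = 1 := sum_prod_apply_eq_one hp1

theorem sum_prod_mul_div_one_add_card_filter_eq (p : α → ℝ) (a : α) :
    ∑ s : ι → α, (∏ j, p (s j)) * (p a / (1 + #{j | s j = a}))
      = ∑ t : Option ι → α,
          (∏ j, p (t j)) * (if t none = a then 1 else 0) / #{j | t j = a} := by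
  rw [← Equiv.piOptionEquivProd.symm.sum_comp, Fintype.sum_prod_type, sum_eq_single a]
  · refine sum_congr rfl fun s _ => ?_
    set t := (Equiv.piOptionEquivProd (β := fun _ => α)).symm (a, s)
    have ht_none : t none = a := rfl
    have ht_some : ∀ j, t (some j) = s j := fun _ => rfl
    rw [Fintype.prod_option, card_filter_option, ht_none]
    simp only [ht_some, if_true, Nat.cast_add, Nat.cast_one]
    ring
  · intro x _ hx
    simp [hx]
  · simp

theorem sum_prod_mul_div_one_add_card_filter_le {p : α → ℝ} (hp0 : ∀ a, 0 ≤ p a)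
    (hp1 : ∑ a, p a = 1) (a : α) :
    ∑ s : ι → α, (∏ j, p (s j)) * (p a / (1 + #{j | s j = a})) ≤ 1 / (Fintype.card ι + 1) := by
  rw [sum_prod_mul_div_one_add_card_filter_eq, le_div_iff₀ (by positivity), mul_comm]
  simpa using card_mul_sum_prod_mul_ite_div_card_filter_le_one hp0 hp1 a (none : Option ι)

end

theorem stmt2 {n : ℕ} (p : Fin n → ℝ) (hp0 : ∀ i, 0 ≤ p i) (hp1 : ∑ i, p i = 1)
    (m : ℕ) :
    ∑ s : Fin m → Fin n, (∏ j, p (s j)) *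
      (∑ i, p i ^ 2 / (1 + ((Finset.univ.filter fun j => s j = i).card : ℝ)))
    ≤ 1 / (m + 1) := by
  calc _ = ∑ i, p i * ∑ s : Fin m → Fin n, (∏ j, p (s j)) * (p i / (1 + #{j | s j = i})) := by
        simp only [mul_sum]
        rw [sum_comm]
        refine sum_congr rfl fun i _ => sum_congr rfl fun s _ => by ring
    _ ≤ ∑ i, p i * (1 / (m + 1)) := by
        gcongr with i
        · exact hp0 i
        · simpa using sum_prod_mul_div_one_add_card_filter_le (ι := Fin m) hp0 hp1 i
    _ = 1 / (m + 1) := by rw [← sum_mul, hp1, one_mul]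
end

section
/- There exists an absolute constant C > 0 such that for every real λ ≥ 0, with f(k) := k·1{k ≥ 4}, the truncated Poisson variance satisfies Var_λ[f] ≤ C · E_λ[f], i.e. ∑_{k=4}^∞ e^{−λ}·λ^k/k!·k² − (∑_{k=4}^∞ e^{−λ}·λ^k/k!·k)² ≤ C · ∑_{k=4}^∞ e^{−λ}·λ^k/k!·k. -/
/-!
Let `w k = e^{-λ} λ^k / k!` and let `T n = ∑_{k ≥ n} w k` be the Poisson tail. The recurrence
`(k + 1) w (k + 1) = λ w k` gives `E[N; N ≥ n + 1] = λ T n` and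
`E[N²; N ≥ n + 2] = λ² T n + λ T (n + 1)`, so with `T = T (n + 1)` the variance of `N; N ≥ n + 2`
is `λ (λ w n) + λ T + λ T · λ (1 - T)`. Both `λ w n = (n + 1) w (n + 1)` and
`λ (1 - T) = ∑_{k ≤ n} (k + 1) w (k + 1)` are at most `n + 1` times a probability, which
bounds the variance by `(2n + 3) λ T`, i.e. by `2n + 3` times the truncated mean.
-/

open Finset
open scoped Nat

theorem hasSum_ite_le_iff {M : Type*} [AddCommGroup M] [TopologicalSpace M]
    [IsTopologicalAddGroup M] {g : ℕ → M} {a : M} (m : ℕ) :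
    HasSum (fun k => if m ≤ k then g k else 0) a ↔ HasSum (fun k => g (k + m)) a := by
  rw [← sub_zero a, ← hasSum_nat_add_iff' m, sum_eq_zero fun k hk => if_neg (by simpa using hk)]
  simp

noncomputable def poissonWeight (lam : ℝ) (k : ℕ) : ℝ := Real.exp (-lam) * lam ^ k / k !

noncomputable def poissonTail (lam : ℝ) (n : ℕ) : ℝ := ∑' k, poissonWeight lam (k + n)

namespace poissonWeight

variable {lam : ℝ}

theorem nonneg (hl : 0 ≤ lam) (k : ℕ) : 0 ≤ poissonWeight lam k := by
  unfold poissonWeight; positivity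

theorem hasSum_one (hl : 0 ≤ lam) : HasSum (poissonWeight lam) 1 :=
  ProbabilityTheory.hasSum_one_poissonMeasure ⟨lam, hl⟩

theorem succ_mul_succ (lam : ℝ) (k : ℕ) :
    (k + 1 : ℝ) * poissonWeight lam (k + 1) = lam * poissonWeight lam k := by
  simp only [poissonWeight, Nat.factorial_succ, Nat.cast_mul, pow_succ]
  field_simp
  push_cast
  ring

theorem sq_mul_add_two (lam : ℝ) (k : ℕ) :
    ((k + 2 : ℕ) : ℝ) ^ 2 * poissonWeight lam (k + 2)
      = lam ^ 2 * poissonWeight lam k + lam * poissonWeight lam (k + 1) := by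
  have h₁ := succ_mul_succ lam k
  have h₂ := succ_mul_succ lam (k + 1)
  push_cast at h₂ ⊢
  linear_combination (k + 2 : ℝ) * h₂ + lam * h₁

end poissonWeight

namespace poissonTail

variable {lam : ℝ}

theorem eq_one_sub (hl : 0 ≤ lam) (n : ℕ) :
    poissonTail lam n = 1 - ∑ k ∈ range n, poissonWeight lam k :=
  ((hasSum_nat_add_iff' n).2 (poissonWeight.hasSum_one hl)).tsum_eq

theorem hasSum (hl : 0 ≤ lam) (n : ℕ) :
    HasSum (fun k => poissonWeight lam (k + n)) (poissonTail lam n) := by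
  rw [eq_one_sub hl]
  exact (hasSum_nat_add_iff' n).2 (poissonWeight.hasSum_one hl)

theorem eq_add_succ (hl : 0 ≤ lam) (n : ℕ) :
    poissonTail lam n = poissonWeight lam n + poissonTail lam (n + 1) := by
  rw [eq_one_sub hl, eq_one_sub hl, sum_range_succ]
  ring

theorem weight_le (hl : 0 ≤ lam) (n : ℕ) : poissonWeight lam n ≤ poissonTail lam n := by
  rw [eq_add_succ hl]
  exact le_add_of_nonneg_right (tsum_nonneg fun k => poissonWeight.nonneg hl _)

theorem nonneg (hl : 0 ≤ lam) (n : ℕ) : 0 ≤ poissonTail lam n :=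
  (poissonWeight.nonneg hl n).trans (weight_le hl n)

theorem mul_one_sub_le (hl : 0 ≤ lam) (n : ℕ) : lam * (1 - poissonTail lam n) ≤ n := by
  have hsum : ∑ k ∈ range n, poissonWeight lam (k + 1) ≤ 1 := by
    have h := sum_le_hasSum (range (n + 1)) (fun k _ => poissonWeight.nonneg hl k)
      (poissonWeight.hasSum_one hl)
    rw [sum_range_succ'] at h
    linarith [poissonWeight.nonneg hl 0]
  calc lam * (1 - poissonTail lam n)
      = ∑ k ∈ range n, (k + 1 : ℝ) * poissonWeight lam (k + 1) := by
        rw [eq_one_sub hl, sub_sub_cancel, mul_sum]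
        exact sum_congr rfl fun k _ => (poissonWeight.succ_mul_succ lam k).symm
    _ ≤ ∑ k ∈ range n, (n : ℝ) * poissonWeight lam (k + 1) := by
        refine sum_le_sum fun k hk => mul_le_mul_of_nonneg_right ?_ (poissonWeight.nonneg hl _)
        exact_mod_cast mem_range.mp hk
    _ ≤ n := by
        rw [← mul_sum]
        exact mul_le_of_le_one_right n.cast_nonneg hsum

end poissonTail

section TruncatedMoments

variable {lam : ℝ}

theorem hasSum_truncated_mean (hl : 0 ≤ lam) (n : ℕ) :
    HasSum (fun k : ℕ => poissonWeight lam k * ((k : ℝ) * if n + 1 ≤ k then 1 else 0))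
      (lam * poissonTail lam n) := by
  simp only [mul_ite, mul_one, mul_zero]
  rw [hasSum_ite_le_iff]
  refine ((poissonTail.hasSum hl n).mul_left lam).congr_fun fun k => ?_
  rw [← add_assoc, mul_comm]
  exact_mod_cast poissonWeight.succ_mul_succ lam (k + n)

theorem hasSum_truncated_sq (hl : 0 ≤ lam) (n : ℕ) :
    HasSum (fun k : ℕ => poissonWeight lam k * ((k : ℝ) * if n + 2 ≤ k then 1 else 0) ^ 2)
      (lam ^ 2 * poissonTail lam n + lam * poissonTail lam (n + 1)) := by
  simp only [mul_ite, mul_one, mul_zero, ite_pow, zero_pow two_ne_zero]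
  rw [hasSum_ite_le_iff]
  refine (((poissonTail.hasSum hl n).mul_left (lam ^ 2)).add
    ((poissonTail.hasSum hl (n + 1)).mul_left lam)).congr_fun fun k => ?_
  rw [mul_comm, ← add_assoc, poissonWeight.sq_mul_add_two, add_assoc]

theorem truncated_variance_le (hl : 0 ≤ lam) (n : ℕ) :
    (∑' k : ℕ, poissonWeight lam k * ((k : ℝ) * if n + 2 ≤ k then 1 else 0) ^ 2)
      - (∑' k : ℕ, poissonWeight lam k * ((k : ℝ) * if n + 2 ≤ k then 1 else 0)) ^ 2
    ≤ (2 * n + 3) * ∑' k : ℕ, poissonWeight lam k * ((k : ℝ) * if n + 2 ≤ k then 1 else 0) := by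
  rw [(hasSum_truncated_sq hl n).tsum_eq, (hasSum_truncated_mean hl (n + 1)).tsum_eq,
    poissonTail.eq_add_succ hl n]
  set T := poissonTail lam (n + 1)
  have hT : 0 ≤ lam * T := mul_nonneg hl (poissonTail.nonneg hl _)
  have hweight : lam * poissonWeight lam n ≤ (n + 1) * T := by
    rw [← poissonWeight.succ_mul_succ]
    exact mul_le_mul_of_nonneg_left (poissonTail.weight_le hl _) (by positivity)
  have hcomplement : lam * (1 - T) ≤ n + 1 := mod_cast poissonTail.mul_one_sub_le hl (n + 1)
  calc lam ^ 2 * (poissonWeight lam n + T) + lam * T - (lam * T) ^ 2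
      = lam * (lam * poissonWeight lam n) + lam * T + lam * T * (lam * (1 - T)) := by ring
    _ ≤ lam * ((n + 1) * T) + lam * T + lam * T * (n + 1) := by gcongr
    _ = (2 * n + 3) * (lam * T) := by ring

end TruncatedMoments

theorem stmt3 : ∃ C : ℝ, 0 < C ∧ ∀ lam : ℝ, 0 ≤ lam →
    (∑' k : ℕ, Real.exp (-lam) * lam ^ k / (Nat.factorial k) *
        ((k : ℝ) * (if 4 ≤ k then 1 else 0)) ^ 2)
      - (∑' k : ℕ, Real.exp (-lam) * lam ^ k / (Nat.factorial k) *
        ((k : ℝ) * (if 4 ≤ k then 1 else 0))) ^ 2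
    ≤ C * ∑' k : ℕ, Real.exp (-lam) * lam ^ k / (Nat.factorial k) *
        ((k : ℝ) * (if 4 ≤ k then 1 else 0)) := by
  refine ⟨2 * (2 : ℕ) + 3, by norm_num, fun lam hl => ?_⟩
  exact truncated_variance_le hl 2
end

section
/- For every real x ≥ 0: (i) ∑_{k=4}^∞ k·e^{−x}·x^k/k! = x − e^{−x}·(x + x² + x³/2), and (ii) x − e^{−x}·(x + x² + x³/2) ≥ γ · min(x, x⁴), where γ := 1 − 5/(2e) > 0. -/
lemma cubic_lb {u : ℝ} (hu : 0 ≤ u) (hu1 : u ≤ 1) :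
    1 - u + u ^ 2 / 2 - u ^ 3 / 6 ≤ Real.exp (-u) := by
  have hp : 0 ≤ 1 - u + u ^ 2 / 2 - u ^ 3 / 6 := by nlinarith [sq_nonneg u, sq_nonneg (1-u)]
  have hC := Real.exp_bound' hu hu1 (n := 4) (by norm_num)
  have hC' : Real.exp u ≤ 1 + u + u ^ 2 / 2 + u ^ 3 / 6 + 5 * u ^ 4 / 96 := by
    have := hC
    simp only [Finset.sum_range_succ, Finset.sum_range_zero, Nat.factorial] at this
    push_cast at this
    linarith
  have h1 : (1 - u + u ^ 2 / 2 - u ^ 3 / 6) * Real.exp u ≤ 1 := by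
    nlinarith [pow_nonneg hu 4, pow_nonneg hu 5, pow_nonneg hu 6, pow_nonneg hu 7,
      Real.exp_pos u, mul_le_mul_of_nonneg_left hC' hp]
  rw [Real.exp_neg, ← one_div, le_div_iff₀ (Real.exp_pos u)]
  exact h1

theorem stmt6 (x : ℝ) (hx : 0 ≤ x) :
    (∑' k : ℕ, (if 4 ≤ k then (k : ℝ) else 0) * Real.exp (-x) * x ^ k / (Nat.factorial k))
      = x - Real.exp (-x) * (x + x ^ 2 + x ^ 3 / 2)
    ∧ (0 : ℝ) < 1 - 5 / (2 * Real.exp 1)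
    ∧ x - Real.exp (-x) * (x + x ^ 2 + x ^ 3 / 2)
        ≥ (1 - 5 / (2 * Real.exp 1)) * min x (x ^ 4) := by
  have hexp : Real.exp (-x) * Real.exp x = 1 := by rw [← Real.exp_add]; simp
  -- Part (i)
  have hg : Summable (fun k : ℕ => if 3 ≤ k then x ^ k / (Nat.factorial k) else 0) := by
    apply Summable.of_nonneg_of_le (fun k => ?_) (fun k => ?_) (Real.summable_pow_div_factorial x)
    · split <;> positivity
    · split
      · exact le_refl _
      · positivity
  have hc : Summable (fun k : ℕ => if 3 ≤ k then 0 else x ^ k / (Nat.factorial k)) :=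
    summable_of_ne_finset_zero (s := Finset.range 3) (fun k hk => by
      rw [Finset.mem_range, not_lt] at hk
      simp [hk])
  have hsumg : (∑' k : ℕ, (if 3 ≤ k then x ^ k / (Nat.factorial k) else 0))
      = Real.exp x - (1 + x + x ^ 2 / 2) := by
    have hsplit : ∀ k : ℕ, (if 3 ≤ k then x ^ k / (Nat.factorial k) else 0)
        = x ^ k / (Nat.factorial k) - (if 3 ≤ k then 0 else x ^ k / (Nat.factorial k)) := by
      intro k; split <;> simp
    simp only [hsplit]
    rw [Summable.tsum_sub (Real.summable_pow_div_factorial x) hc]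
    have h1 : (∑' n : ℕ, x ^ n / (Nat.factorial n : ℝ)) = Real.exp x := by
      rw [Real.exp_eq_exp_ℝ, NormedSpace.exp_eq_tsum_div]
    have h2 : (∑' k : ℕ, (if 3 ≤ k then 0 else x ^ k / (Nat.factorial k : ℝ)))
        = 1 + x + x ^ 2 / 2 := by
      rw [tsum_eq_sum (s := Finset.range 3) (fun k hk => by
        rw [Finset.mem_range, not_lt] at hk
        simp [hk])]
      simp [Finset.sum_range_succ, Nat.factorial]
    rw [h1, h2]
  have hshift : ∀ k : ℕ, (if 4 ≤ k + 1 then ((k + 1 : ℕ) : ℝ) else 0) * Real.exp (-x) *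
        x ^ (k + 1) / (Nat.factorial (k + 1))
      = (Real.exp (-x) * x) * (if 3 ≤ k then x ^ k / (Nat.factorial k) else 0) := by
    intro k
    by_cases h : 3 ≤ k
    · rw [if_pos h, if_pos (by omega), Nat.factorial_succ]
      have h2 : (Nat.factorial k : ℝ) ≠ 0 := Nat.cast_ne_zero.mpr (Nat.factorial_ne_zero k)
      push_cast
      field_simp
      ring
    · rw [if_neg (by omega), if_neg h]
      simp
  have hf : Summable (fun k : ℕ => (if 4 ≤ k then (k : ℝ) else 0) * Real.exp (-x) * x ^ k /
      (Nat.factorial k)) := by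
    apply (summable_nat_add_iff 1).mp
    simp only [hshift]
    exact hg.mul_left _
  have part1 : (∑' k : ℕ, (if 4 ≤ k then (k : ℝ) else 0) * Real.exp (-x) * x ^ k /
      (Nat.factorial k)) = x - Real.exp (-x) * (x + x ^ 2 + x ^ 3 / 2) := by
    rw [Summable.tsum_eq_zero_add hf]
    simp only [hshift]
    rw [tsum_mul_left, hsumg]
    norm_num
    linear_combination x * hexp
  refine ⟨part1, ?_, ?_⟩
  · have he : (2.7182818283 : ℝ) < Real.exp 1 := Real.exp_one_gt_d9
    rw [sub_pos, div_lt_one (by positivity)]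
    linarith
  · have he1 : (0:ℝ) < Real.exp 1 := Real.exp_pos 1
    have hinv : Real.exp 1 * (Real.exp 1)⁻¹ = 1 := mul_inv_cancel₀ (ne_of_gt he1)
    have hEY : Real.exp (-x) * Real.exp (x - 1) * Real.exp 1 = 1 := by
      rw [← Real.exp_add, ← Real.exp_add, show -x + (x - 1) + 1 = 0 by ring, Real.exp_zero]
    by_cases hx1 : x ≤ 1
    · -- min = x^4
      have hmin : min x (x ^ 4) = x ^ 4 := min_eq_right (by
        nlinarith [mul_nonneg (mul_nonneg hx (by linarith : (0:ℝ) ≤ 1 - x))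
          (by positivity : (0:ℝ) ≤ 1 + x + x ^ 2)])
      rw [hmin]
      have hA : 1 + x + x ^ 2 / 2 + x ^ 3 / 6 + x ^ 4 / 24 ≤ Real.exp x := by
        have := Real.sum_le_exp_of_nonneg hx 5
        simp only [Finset.sum_range_succ, Finset.sum_range_zero, Nat.factorial] at this
        push_cast at this
        linarith
      have hB : x ^ 3 / 6 + x / 2 + 1 / 3 ≤ Real.exp (x - 1) := by
        have := cubic_lb (u := 1 - x) (by linarith) (by linarith)
        rw [show -(1 - x) = x - 1 by ring] at this
        nlinarith [this]
      have hkey : 0 ≤ (x - x ^ 4) * Real.exp x + (5 / 2) * x ^ 4 * Real.exp (x - 1)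
          - (x + x ^ 2 + x ^ 3 / 2) := by
        have h1 : (0:ℝ) ≤ x - x ^ 4 := by
          nlinarith [mul_nonneg (mul_nonneg hx (by linarith : (0:ℝ) ≤ 1 - x))
            (by positivity : (0:ℝ) ≤ 1 + x + x ^ 2)]
        have h2 : (0:ℝ) ≤ (5 / 2) * x ^ 4 := by positivity
        have m1 := mul_le_mul_of_nonneg_left hA h1
        have m2 := mul_le_mul_of_nonneg_left hB h2
        have hpos : 0 ≤ x ^ 5 * ((1 - x) * (x ^ 2 - 5 * x + 7)) :=
          mul_nonneg (pow_nonneg hx 5)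
            (mul_nonneg (by linarith) (by nlinarith [sq_nonneg (x - 5/2)]))
        nlinarith [m1, m2, hpos]
      have hid : x - Real.exp (-x) * (x + x ^ 2 + x ^ 3 / 2) - (1 - 5 / (2 * Real.exp 1)) * x ^ 4
          = Real.exp (-x) * ((x - x ^ 4) * Real.exp x + (5 / 2) * x ^ 4 * Real.exp (x - 1)
            - (x + x ^ 2 + x ^ 3 / 2)) := by
        linear_combination (x ^ 4 - x) * hexp - (5 * x ^ 4 / (2 * Real.exp 1)) * hEY +
          (5 / 2 * x ^ 4 * Real.exp (-x) * Real.exp (x - 1)) * hinv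
      rw [ge_iff_le, ← sub_nonneg, hid]
      exact mul_nonneg (Real.exp_pos _).le hkey
    · -- min = x
      push_neg at hx1
      have hmin : min x (x ^ 4) = x := min_eq_left (by
        nlinarith [mul_nonneg (mul_nonneg hx (by linarith : (0:ℝ) ≤ x - 1))
          (by positivity : (0:ℝ) ≤ x ^ 2 + x + 1)])
      rw [hmin]
      have hquad : 1 + (x - 1) + (x - 1) ^ 2 / 2 ≤ Real.exp (x - 1) :=
        Real.quadratic_le_exp_of_nonneg (by linarith)
      have hkey : 0 ≤ (5 / 2) * x * Real.exp (x - 1) - (x + x ^ 2 + x ^ 3 / 2) := by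
        have h2 : (0:ℝ) ≤ (5 / 2) * x := by positivity
        have m2 := mul_le_mul_of_nonneg_left hquad h2
        nlinarith [m2, mul_nonneg (mul_nonneg hx (by linarith : (0:ℝ) ≤ 3 * x - 1))
          (by linarith : (0:ℝ) ≤ x - 1)]
      have hid : x - Real.exp (-x) * (x + x ^ 2 + x ^ 3 / 2) - (1 - 5 / (2 * Real.exp 1)) * x
          = Real.exp (-x) * ((5 / 2) * x * Real.exp (x - 1) - (x + x ^ 2 + x ^ 3 / 2)) := by
        linear_combination (-(5 * x / (2 * Real.exp 1))) * hEY +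
          (5 / 2 * x * Real.exp (-x) * Real.exp (x - 1)) * hinv
      rw [ge_iff_le, ← sub_nonneg, hid]
      exact mul_nonneg (Real.exp_pos _).le hkey
end

section
/- Let X, Y, Z be finite sets with |X| = ℓ₁ ≥ 1 and |Y| = ℓ₂ ≥ 1, let ε > 0, and let p be a probability distribution on X × Y × Z such that d_TV(p, q') > ε for every conditionally independent distribution q' on X × Y × Z. Then ∑_{z∈Z} p_Z(z) · ( ∑_{i∈X, j∈Y} (p_z(i,j) − p_{z,X}(i)·p_{z,Y}(j))² )^{1/2} > 2ε/√(ℓ₁·ℓ₂). -/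
open Finset

/-!
The product of the conditional marginals, `q(i,j,z) = p_Z(z) p_{z,X}(i) p_{z,Y}(j)`, is a
conditionally independent distribution, so `ε < d_TV(p, q)`. Splitting `d_TV(p, q)` along `z`
gives `½ ∑_z p_Z(z) ∑_{i,j} |p_z(i,j) - p_{z,X}(i) p_{z,Y}(j)|`, and Cauchy–Schwarz bounds each
inner sum of `ℓ₁ℓ₂` terms by `√(ℓ₁ℓ₂)` times the square root of the sum of squares.
-/

theorem sum_abs_le_sqrt_card_mul_sqrt_sum_sq {ι : Type*} [Fintype ι] (f : ι → ℝ) :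
    ∑ i, |f i| ≤ √(Fintype.card ι) * √(∑ i, f i ^ 2) := by
  simpa [sq_abs] using Real.sum_mul_le_sqrt_mul_sqrt univ (fun _ => 1) (fun i => |f i|)

section CondIndep

variable {X Y Z : Type*} [Fintype X] [Fintype Y]

theorem sum_sum_abs_le_sqrt_card_mul_sqrt_sum_sum_sq (f : X → Y → ℝ) :
    ∑ i, ∑ j, |f i j| ≤
      √((Fintype.card X : ℝ) * Fintype.card Y) * √(∑ i, ∑ j, f i j ^ 2) := by
  simpa only [Fintype.sum_prod_type, Fintype.card_prod, Nat.cast_mul] using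
    sum_abs_le_sqrt_card_mul_sqrt_sum_sq fun ij : X × Y => f ij.1 ij.2

def IsCondIndep (q : X × Y × Z → ℝ) : Prop :=
  ∀ i j z, q (i, j, z) * margZ q z = (∑ j', q (i, j', z)) * (∑ i', q (i', j, z))

noncomputable def condX (p : X × Y × Z → ℝ) (z : Z) (i : X) : ℝ :=
  ∑ j, condZ p z (i, j)

noncomputable def condY (p : X × Y × Z → ℝ) (z : Z) (j : Y) : ℝ :=
  ∑ i, condZ p z (i, j)

noncomputable def condMarginalProd (p : X × Y × Z → ℝ) : X × Y × Z → ℝ :=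
  fun ω => margZ p ω.2.2 * condX p ω.2.2 ω.1 * condY p ω.2.2 ω.2.1

theorem sum_eq_sum_margZ [Fintype Z] (p : X × Y × Z → ℝ) : ∑ ω, p ω = ∑ z, margZ p z := by
  simp only [margZ, Fintype.sum_prod_type]
  exact (sum_congr rfl fun _ _ => sum_comm).trans sum_comm

theorem margZ_nonneg {p : X × Y × Z → ℝ} (hp : ∀ ω, 0 ≤ p ω) (z : Z) : 0 ≤ margZ p z :=
  sum_nonneg fun _ _ => sum_nonneg fun _ _ => hp _

theorem condZ_nonneg {p : X × Y × Z → ℝ} (hp : ∀ ω, 0 ≤ p ω) (z : Z) (ij : X × Y) :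
    0 ≤ condZ p z ij :=
  div_nonneg (hp _) (margZ_nonneg hp z)

theorem margZ_mul_condZ {p : X × Y × Z → ℝ} (hp : ∀ ω, 0 ≤ p ω) (i : X) (j : Y) (z : Z) :
    margZ p z * condZ p z (i, j) = p (i, j, z) := by
  by_cases hz : margZ p z = 0
  · have hi := (sum_eq_zero_iff_of_nonneg fun i _ => sum_nonneg fun j _ => hp (i, j, z)).mp hz
      i (mem_univ i)
    rw [hz, zero_mul, (sum_eq_zero_iff_of_nonneg fun j _ => hp (i, j, z)).mp hi j (mem_univ j)]
  · exact mul_div_cancel₀ _ hz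

/-- Holds also when `p_Z(z) = 0`, where `condZ` is identically `0`. -/
theorem margZ_mul_sum_condX (p : X × Y × Z → ℝ) (z : Z) :
    margZ p z * ∑ i, condX p z i = margZ p z := by
  simp only [condX, condZ, ← sum_div]
  rw [mul_div_assoc']
  exact mul_self_div_self (margZ p z)

theorem margZ_mul_sum_condY (p : X × Y × Z → ℝ) (z : Z) :
    margZ p z * ∑ j, condY p z j = margZ p z := by
  simp only [condY]
  rw [Finset.sum_comm]
  exact margZ_mul_sum_condX p z

theorem sum_condMarginalProd_snd (p : X × Y × Z → ℝ) (i : X) (z : Z) :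
    ∑ j, condMarginalProd p (i, j, z) = margZ p z * condX p z i := by
  simp only [condMarginalProd, ← mul_sum]
  rw [mul_right_comm, margZ_mul_sum_condY]

theorem sum_condMarginalProd_fst (p : X × Y × Z → ℝ) (j : Y) (z : Z) :
    ∑ i, condMarginalProd p (i, j, z) = margZ p z * condY p z j := by
  simp only [condMarginalProd, ← sum_mul, ← mul_sum]
  rw [margZ_mul_sum_condX]

theorem margZ_condMarginalProd (p : X × Y × Z → ℝ) (z : Z) :
    margZ (condMarginalProd p) z = margZ p z := by
  simp only [margZ.eq_1 (condMarginalProd p), sum_condMarginalProd_snd, ← mul_sum]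
  exact margZ_mul_sum_condX p z

theorem condMarginalProd_nonneg {p : X × Y × Z → ℝ} (hp : ∀ ω, 0 ≤ p ω) (ω : X × Y × Z) :
    0 ≤ condMarginalProd p ω :=
  mul_nonneg (mul_nonneg (margZ_nonneg hp _) (sum_nonneg fun _ _ => condZ_nonneg hp _ _))
    (sum_nonneg fun _ _ => condZ_nonneg hp _ _)

theorem sum_condMarginalProd [Fintype Z] (p : X × Y × Z → ℝ) :
    ∑ ω, condMarginalProd p ω = ∑ ω, p ω := by
  simp only [sum_eq_sum_margZ, margZ_condMarginalProd]

theorem isCondIndep_condMarginalProd (p : X × Y × Z → ℝ) :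
    IsCondIndep (condMarginalProd p) := by
  intro i j z
  rw [margZ_condMarginalProd, sum_condMarginalProd_snd, sum_condMarginalProd_fst,
    condMarginalProd]
  ring

theorem dTV_condMarginalProd [Fintype Z] {p : X × Y × Z → ℝ} (hp : ∀ ω, 0 ≤ p ω) :
    dTV p (condMarginalProd p) = 1 / 2 * ∑ z, margZ p z *
      ∑ i, ∑ j, |condZ p z (i, j) - condX p z i * condY p z j| := by
  rw [dTV, sum_eq_sum_margZ]
  congr 1
  refine sum_congr rfl fun z _ => ?_
  simp only [margZ, mul_sum]
  refine sum_congr rfl fun i _ => sum_congr rfl fun j _ => ?_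
  rw [← margZ_mul_condZ hp i j z, condMarginalProd, mul_assoc, ← mul_sub, abs_mul,
    abs_of_nonneg (margZ_nonneg hp z), margZ]

theorem dTV_condMarginalProd_le [Fintype Z] {p : X × Y × Z → ℝ} (hp : ∀ ω, 0 ≤ p ω) :
    dTV p (condMarginalProd p) ≤
      1 / 2 * √((Fintype.card X : ℝ) * Fintype.card Y) * ∑ z, margZ p z *
        √(∑ i, ∑ j, (condZ p z (i, j) - condX p z i * condY p z j) ^ 2) := by
  rw [dTV_condMarginalProd hp, mul_assoc]
  gcongr
  rw [mul_sum]
  refine sum_le_sum fun z _ => ?_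
  rw [mul_left_comm]
  exact mul_le_mul_of_nonneg_left (sum_sum_abs_le_sqrt_card_mul_sqrt_sum_sum_sq _)
    (margZ_nonneg hp z)

end CondIndep

theorem stmt7_general {X Y Z : Type*} [Fintype X] [Fintype Y] [Fintype Z]
    (l1 l2 : ℕ) (hX : Fintype.card X = l1) (hY : Fintype.card Y = l2)
    (ε : ℝ) (hε : 0 < ε)
    (p : X × Y × Z → ℝ) (hp0 : ∀ ω, 0 ≤ p ω) (hp1 : ∑ ω, p ω = 1)
    (hfar : ∀ q' : X × Y × Z → ℝ, (∀ ω, 0 ≤ q' ω) → (∑ ω, q' ω = 1) →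
      (∀ i j z, q' (i, j, z) * margZ q' z =
        (∑ j', q' (i, j', z)) * (∑ i', q' (i', j, z))) →
      dTV p q' > ε) :
    ∑ z, margZ p z * Real.sqrt (∑ i, ∑ j,
        (condZ p z (i, j) -
          (∑ j', condZ p z (i, j')) * (∑ i', condZ p z (i', j))) ^ 2)
    > 2 * ε / Real.sqrt ((l1 : ℝ) * l2) := by
  set S := ∑ z, margZ p z * Real.sqrt (∑ i, ∑ j,
    (condZ p z (i, j) - (∑ j', condZ p z (i, j')) * (∑ i', condZ p z (i', j))) ^ 2)
  have hε_lt : ε < 1 / 2 * √((l1 : ℝ) * l2) * S := by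
    subst hX hY
    exact (hfar _ (condMarginalProd_nonneg hp0) (by rw [sum_condMarginalProd, hp1])
      (isCondIndep_condMarginalProd p)).trans_le (dTV_condMarginalProd_le hp0)
  have hS : 0 ≤ S := sum_nonneg fun z _ => mul_nonneg (margZ_nonneg hp0 z) (Real.sqrt_nonneg _)
  have hsqrt : 0 < √((l1 : ℝ) * l2) := pos_of_mul_pos_left (by linarith) hS
  rw [gt_iff_lt, div_lt_iff₀ hsqrt]
  linarith

theorem stmt7 {X Y Z : Type*} [Fintype X] [Fintype Y] [Fintype Z]
    (l1 l2 : ℕ) (hX : Fintype.card X = l1) (hY : Fintype.card Y = l2)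
    (hl1 : 1 ≤ l1) (hl2 : 1 ≤ l2)
    (ε : ℝ) (hε : 0 < ε)
    (p : X × Y × Z → ℝ) (hp0 : ∀ ω, 0 ≤ p ω) (hp1 : ∑ ω, p ω = 1)
    (hfar : ∀ q' : X × Y × Z → ℝ, (∀ ω, 0 ≤ q' ω) → (∑ ω, q' ω = 1) →
      (∀ i j z, q' (i, j, z) * margZ q' z =
        (∑ j', q' (i, j', z)) * (∑ i', q' (i', j, z))) →
      dTV p q' > ε) :
    ∑ z, margZ p z * Real.sqrt (∑ i, ∑ j,
        (condZ p z (i, j) -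
          (∑ j', condZ p z (i, j')) * (∑ i', condZ p z (i', j))) ^ 2)
    > 2 * ε / Real.sqrt ((l1 : ℝ) * l2) :=
  stmt7_general l1 l2 hX hY ε hε p hp0 hp1 hfar
end

section
/- Let Q ∈ ℝ[X_1,…,X_n] be homogeneous of degree d and let N ≥ d. Then for every probability distribution p on [n], the expectation over an N-sample from p of U_N Q applied to the fingerprint Φ equals Q(p): E[U_N Q(Φ)] = Q(p_1,…,p_n). (In particular, U_N Q is an unbiased estimator for Q(p).) -/
/-!
Expanding `U_N Q` linearly, it suffices to treat a single monomial `X^α` with `|α| = d`.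
Since `α_i! · C(Φ_i, α_i)` is the falling factorial `Φ_i^(α_i)`, the claim reduces to the
factorial-moment identity `E[∏ Φ_i^(α_i)] = N^(d) · p^α` for the multinomial counts `Φ`. That
identity follows by induction on `N`, splitting off the first sample: if it equals `i₀`, only
`Φ_{i₀}` grows by one, and `(m + 1)^(k) = m^(k) + k · m^(k - 1)`.
-/

open Finset

/-- The fingerprint of a sample tuple: the count of occurrences of each element. -/
def fingerprint {N n : ℕ} (s : Fin N → Fin n) : Fin n → ℕ :=
  fun i => (Finset.univ.filter fun j => s j = i).card

/-- The unbiased estimator `U_N Q` for a (homogeneous degree-`d`) polynomial `Q`,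
evaluated at a fingerprint `φ`. -/
noncomputable def estU {n : ℕ} (N d : ℕ) (Q : MvPolynomial (Fin n) ℝ)
    (φ : Fin n → ℕ) : ℝ :=
  ∑ α ∈ Q.support, Q.coeff α *
    (((N - d).factorial : ℝ) * ∏ i, ((α i).factorial : ℝ)) / (N.factorial : ℝ) *
    ∏ i, ((φ i).choose (α i) : ℝ)

theorem Nat.succ_descFactorial_eq_add_mul (m k : ℕ) :
    (m + 1).descFactorial k = m.descFactorial k + k * m.descFactorial (k - 1) := by
  cases k with
  | zero => simp
  | succ k =>
    rw [Nat.succ_descFactorial_succ, Nat.descFactorial_succ, Nat.add_sub_cancel, ← add_mul]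
    rcases le_or_gt k m with hkm | hmk
    · congr 1; omega
    · simp [Nat.descFactorial_eq_zero_iff_lt.2 hmk]

lemma prod_descFactorial_add_single {ι : Type*} [Fintype ι] [DecidableEq ι] (φ α : ι → ℕ)
    (i₀ : ι) :
    ∏ i, (φ i + (Pi.single i₀ 1 : ι → ℕ) i).descFactorial (α i)
      = ∏ i, (φ i).descFactorial (α i)
        + α i₀ * ∏ i, (φ i).descFactorial (Function.update α i₀ (α i₀ - 1) i) := by
  simp only [← mul_prod_erase univ _ (mem_univ i₀), Pi.single_eq_same, Function.update_self,
    Nat.succ_descFactorial_eq_add_mul]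
  have hsingle : ∏ i ∈ univ.erase i₀, (φ i + (Pi.single i₀ 1 : ι → ℕ) i).descFactorial (α i)
      = ∏ i ∈ univ.erase i₀, (φ i).descFactorial (α i) :=
    prod_congr rfl fun i hi => by rw [Pi.single_eq_of_ne (ne_of_mem_erase hi), add_zero]
  have hupdate : ∏ i ∈ univ.erase i₀, (φ i).descFactorial (Function.update α i₀ (α i₀ - 1) i)
      = ∏ i ∈ univ.erase i₀, (φ i).descFactorial (α i) :=
    prod_congr rfl fun i hi => by rw [Function.update_of_ne (ne_of_mem_erase hi)]
  rw [hsingle, hupdate]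
  ring

lemma mul_prod_pow_update_sub_one {M ι : Type*} [CommMonoid M] [Fintype ι] [DecidableEq ι]
    (p : ι → M) {α : ι → ℕ} {i₀ : ι} (h : α i₀ ≠ 0) :
    p i₀ * ∏ i, p i ^ Function.update α i₀ (α i₀ - 1) i = ∏ i, p i ^ α i := by
  rw [← mul_prod_erase univ _ (mem_univ i₀),
    ← mul_prod_erase univ (fun i => p i ^ α i) (mem_univ i₀), Function.update_self, ← mul_assoc,
    ← pow_succ', Nat.sub_add_cancel (Nat.one_le_iff_ne_zero.2 h)]
  congr 1
  exact prod_congr rfl fun i hi => by rw [Function.update_of_ne (ne_of_mem_erase hi)]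

lemma sum_update_sub_one {ι : Type*} [Fintype ι] [DecidableEq ι] {α : ι → ℕ} {i₀ : ι}
    (h : α i₀ ≠ 0) : ∑ i, Function.update α i₀ (α i₀ - 1) i = ∑ i, α i - 1 := by
  have := add_sum_erase univ α (mem_univ i₀)
  rw [sum_update_of_mem (mem_univ i₀), sdiff_singleton_eq_erase]
  omega

lemma fingerprint_cons {N n : ℕ} (i₀ : Fin n) (s : Fin N → Fin n) :
    fingerprint (Fin.cons i₀ s : Fin (N + 1) → Fin n) = fingerprint s + Pi.single i₀ 1 := by
  ext i
  simp only [fingerprint, Finset.card_filter, Fin.sum_univ_succ, Fin.cons_zero, Fin.cons_succ,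
    Pi.add_apply, Pi.single_apply, eq_comm (a := i)]
  ring

theorem sum_prod_mul_prod_descFactorial_fingerprint {R : Type*} [CommSemiring R] {n : ℕ}
    (p : Fin n → R) (hp : ∑ i, p i = 1) (N : ℕ) (α : Fin n → ℕ) :
    ∑ s : Fin N → Fin n, (∏ j, p (s j)) * ∏ i, ((fingerprint s i).descFactorial (α i) : R)
      = N.descFactorial (∑ i, α i) * ∏ i, p i ^ α i := by
  induction N generalizing α with
  | zero =>
    have h0 : ∀ s : Fin 0 → Fin n, fingerprint s = 0 := fun s => by ext; simp [fingerprint]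
    simp only [Fintype.sum_unique, h0, Pi.zero_apply, univ_eq_empty, prod_empty, one_mul]
    by_cases hα : α = 0
    · simp [hα]
    obtain ⟨i, hi⟩ := Function.ne_iff.1 hα
    have hsum : ∑ i, α i ≠ 0 := fun h => hi (sum_eq_zero_iff.1 h i (mem_univ i))
    have hzero {k : ℕ} (hk : k ≠ 0) : ((0 : ℕ).descFactorial k : R) = 0 := by
      rw [Nat.descFactorial_eq_zero_iff_lt.2 (Nat.pos_of_ne_zero hk), Nat.cast_zero]
    rw [prod_eq_zero (mem_univ i) (hzero hi), hzero hsum, zero_mul]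
  | succ N ih =>
    have hterm : ∀ i₀ (s : Fin N → Fin n),
        (∏ j, p ((Fin.cons i₀ s : Fin (N + 1) → Fin n) j)) *
            ∏ i, ((fingerprint (Fin.cons i₀ s : Fin (N + 1) → Fin n) i).descFactorial (α i) : R)
          = p i₀ * ((∏ j, p (s j)) * ∏ i, ((fingerprint s i).descFactorial (α i) : R))
            + p i₀ * α i₀ * ((∏ j, p (s j)) * ∏ i,
                ((fingerprint s i).descFactorial (Function.update α i₀ (α i₀ - 1) i) : R)) := by
      intro i₀ s
      rw [Fin.prod_univ_succ, fingerprint_cons]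
      simp only [Pi.add_apply, Fin.cons_zero, Fin.cons_succ]
      rw [← Nat.cast_prod, prod_descFactorial_add_single]
      push_cast
      ring
    have hlower : ∀ i₀, p i₀ * α i₀ *
          ((N.descFactorial (∑ i, Function.update α i₀ (α i₀ - 1) i) : R) *
            ∏ i, p i ^ Function.update α i₀ (α i₀ - 1) i)
        = α i₀ * ((N.descFactorial (∑ i, α i - 1) : R) * ∏ i, p i ^ α i) := by
      intro i₀
      rcases eq_or_ne (α i₀) 0 with h | h
      · simp [h]
      · rw [sum_update_sub_one h, ← mul_prod_pow_update_sub_one p h]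
        ring
    rw [← (Fin.consEquiv fun _ => Fin n).sum_comp, Fintype.sum_prod_type]
    refine (sum_congr rfl fun i₀ _ => sum_congr rfl fun s _ => hterm i₀ s).trans ?_
    simp only [sum_add_distrib, ← mul_sum, ih, hlower, ← sum_mul, hp,
      Nat.succ_descFactorial_eq_add_mul]
    push_cast
    ring

theorem factorial_mul_prod_factorial_div_mul_sum_prod_choose_fingerprint {K : Type*} [Field K]
    [CharZero K] {n N d : ℕ} (hd : d ≤ N) (p : Fin n → K) (hp : ∑ i, p i = 1) (α : Fin n → ℕ)
    (hα : ∑ i, α i = d) :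
    ((N - d).factorial * ∏ i, ((α i).factorial : K)) / N.factorial *
        ∑ s : Fin N → Fin n, (∏ j, p (s j)) * ∏ i, ((fingerprint s i).choose (α i) : K)
      = ∏ i, p i ^ α i := by
  have hchoose : (∏ i, ((α i).factorial : K)) *
        ∑ s : Fin N → Fin n, (∏ j, p (s j)) * ∏ i, ((fingerprint s i).choose (α i) : K)
      = N.descFactorial d * ∏ i, p i ^ α i := by
    rw [← hα, ← sum_prod_mul_prod_descFactorial_fingerprint p hp, mul_sum]
    refine sum_congr rfl fun s _ => ?_
    simp only [Nat.descFactorial_eq_factorial_mul_choose, Nat.cast_mul, prod_mul_distrib]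
    ring
  have hfact : ((N - d).factorial : K) * N.descFactorial d = N.factorial := by
    exact_mod_cast Nat.factorial_mul_descFactorial hd
  calc _ = (N - d).factorial / N.factorial * ((∏ i, ((α i).factorial : K)) *
        ∑ s : Fin N → Fin n, (∏ j, p (s j)) * ∏ i, ((fingerprint s i).choose (α i) : K)) := by
        ring
    _ = _ := by
      rw [hchoose, ← mul_assoc, div_mul_eq_mul_div, hfact,
        div_self (Nat.cast_ne_zero.2 N.factorial_ne_zero), one_mul]

theorem stmt10_general {n : ℕ} (d N : ℕ) (hN : d ≤ N)
    (Q : MvPolynomial (Fin n) ℝ) (hQ : Q.IsHomogeneous d)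
    (p : Fin n → ℝ) (hp1 : ∑ i, p i = 1) :
    ∑ s : Fin N → Fin n, (∏ j, p (s j)) * estU N d Q (fingerprint s)
    = MvPolynomial.eval p Q := by
  rw [MvPolynomial.eval_eq']
  simp only [estU, mul_sum]
  rw [sum_comm]
  refine sum_congr rfl fun α hα => ?_
  have hdeg : ∑ i, α i = d := by
    rw [← Finsupp.degree_eq_sum, Finsupp.degree_apply, hQ.degree_eq_sum_deg_support hα]
  rw [← factorial_mul_prod_factorial_div_mul_sum_prod_choose_fingerprint hN p hp1 α hdeg, mul_sum,
    mul_sum]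
  exact sum_congr rfl fun s _ => by ring

theorem stmt10 {n : ℕ} (d N : ℕ) (hN : d ≤ N)
    (Q : MvPolynomial (Fin n) ℝ) (hQ : Q.IsHomogeneous d)
    (p : Fin n → ℝ) (hp0 : ∀ i, 0 ≤ p i) (hp1 : ∑ i, p i = 1) :
    ∑ s : Fin N → Fin n, (∏ j, p (s j)) * estU N d Q (fingerprint s)
    = MvPolynomial.eval p Q :=
  stmt10_general d N hN Q hQ p hp1
end

section
/- Let n ≥ 1, let Q ∈ ℝ[X_1,…,X_n] be homogeneous of degree d, and let N ≥ d. Suppose V : ℕⁿ → ℝ satisfies, for every probability distribution p on [n], E[V(Φ)] = Q(p_1,…,p_n), where Φ is the fingerprint of an N-sample from p. Then V(φ) = U_N Q(φ) for every φ ∈ ℕⁿ with ∑_i φ_i = N. (That is, U_N Q is the unique symmetric unbiased estimator for Q(p).) -/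
/-!
Grouping the `N`-samples by fingerprint gives `E[V] = ∑_{|φ| = N} multinomial(φ) V(φ) p^φ`.
On the simplex `Q(p) = Q(p) (∑ p_i)^(N-d)`, and expanding `p^α (∑ p_i)^(N-d)` by the multinomial
theorem shows that this equals `∑_{|φ| = N} multinomial(φ) U_N Q(φ) p^φ`. Monomials of degree `N`
are linearly independent as functions on the simplex: by homogeneity such a combination vanishing
there vanishes on the open positive orthant, hence is the zero polynomial. Comparing coefficients
and dividing by `multinomial(φ) ≠ 0` gives `V(φ) = U_N Q(φ)`.
-/

open Finset

open MvPolynomial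

section MonomialIndependence

variable {σ : Type*} [Fintype σ]

theorem eq_zero_of_sum_mul_prod_pow_eq_zero_of_pos (A : Finset (σ → ℕ)) (c : (σ → ℕ) → ℝ)
    (h : ∀ x : σ → ℝ, (∀ i, 0 < x i) → ∑ φ ∈ A, c φ * ∏ i, x i ^ φ i = 0) :
    ∀ φ ∈ A, c φ = 0 := by
  classical
  let P : MvPolynomial σ ℝ := ∑ φ ∈ A, monomial (Finsupp.equivFunOnFinite.symm φ) (c φ)
  have hP : P = 0 := funext_set (fun _ ↦ Set.Ioi 0) (fun _ ↦ Set.Ioi_infinite 0) fun x hx ↦ by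
    simpa [P, eval_monomial, Finsupp.prod_fintype] using h x fun i ↦ hx i trivial
  intro φ hφ
  simpa [P, coeff_sum, coeff_monomial, hφ] using
    congrArg (coeff (Finsupp.equivFunOnFinite.symm φ)) hP

theorem eq_zero_of_sum_mul_prod_pow_eq_zero_on_stdSimplex [DecidableEq σ] [Nonempty σ] {N : ℕ}
    (c : (σ → ℕ) → ℝ)
    (h : ∀ p ∈ stdSimplex ℝ σ, ∑ φ ∈ piAntidiag univ N, c φ * ∏ i, p i ^ φ i = 0) :
    ∀ φ ∈ piAntidiag univ N, c φ = 0 := by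
  refine eq_zero_of_sum_mul_prod_pow_eq_zero_of_pos _ c fun x hx ↦ ?_
  set T := ∑ i, x i
  have hT : 0 < T := sum_pos (fun i _ ↦ hx i) univ_nonempty
  have hscale : ∀ φ ∈ piAntidiag univ N, ∏ i, x i ^ φ i = T ^ N * ∏ i, (x i / T) ^ φ i := by
    intro φ hφ
    rw [← (mem_piAntidiag.mp hφ).1, ← prod_pow_eq_pow_sum, ← prod_mul_distrib]
    exact prod_congr rfl fun i _ ↦ by rw [div_pow, mul_div_cancel₀ _ (pow_ne_zero _ hT.ne')]
  have hsimplex : (fun i ↦ x i / T) ∈ stdSimplex ℝ σ :=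
    ⟨fun i ↦ div_nonneg (hx i).le hT.le, by rw [← sum_div, div_self hT.ne']⟩
  rw [sum_congr rfl fun φ hφ ↦ by rw [hscale φ hφ, mul_left_comm], ← mul_sum, h _ hsimplex,
    mul_zero]

end MonomialIndependence

section Fingerprint

variable {n N : ℕ}

theorem prod_comp_eq_prod_pow_fingerprint {M : Type*} [CommMonoid M] (p : Fin n → M)
    (s : Fin N → Fin n) : ∏ j, p (s j) = ∏ i, p i ^ fingerprint s i := by
  rw [← prod_fiberwise_of_maps_to (g := s) (t := univ) (fun _ _ ↦ mem_univ _)]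
  refine prod_congr rfl fun i _ ↦ ?_
  rw [fingerprint, ← prod_const]
  exact prod_congr rfl fun j hj ↦ by rw [(mem_filter.mp hj).2]

theorem fingerprint_mem_piAntidiag (s : Fin N → Fin n) :
    fingerprint s ∈ piAntidiag univ N := by
  refine mem_piAntidiag.mpr ⟨?_, fun i _ ↦ mem_univ i⟩
  show ∑ i, #{j | s j = i} = N
  simpa using (card_eq_sum_card_fiberwise (s := univ) fun j _ ↦ mem_univ (s j)).symm

theorem sum_prod_mul_fingerprint {R : Type*} [CommSemiring R] (p : Fin n → R)
    (V : (Fin n → ℕ) → R) :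
    ∑ s : Fin N → Fin n, (∏ j, p (s j)) * V (fingerprint s) =
      ∑ φ ∈ piAntidiag univ N, #{s : Fin N → Fin n | fingerprint s = φ} * V φ *
        ∏ i, p i ^ φ i := by
  rw [← sum_fiberwise_of_maps_to fun s _ ↦ fingerprint_mem_piAntidiag s]
  refine sum_congr rfl fun φ _ ↦ ?_
  rw [sum_congr rfl fun s hs ↦ by rw [prod_comp_eq_prod_pow_fingerprint, (mem_filter.mp hs).2],
    sum_const, nsmul_eq_mul, mul_assoc, mul_comm (V φ)]

theorem card_fingerprint_eq_multinomial [Nonempty (Fin n)] {φ : Fin n → ℕ}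
    (hφ : φ ∈ piAntidiag univ N) :
    #{s : Fin N → Fin n | fingerprint s = φ} = Nat.multinomial univ φ := by
  -- both sides are the coefficients of `(∑ i, p i) ^ N` in the monomials `p ^ φ`
  have hpow (p : Fin n → ℝ) :
      ∑ φ ∈ piAntidiag univ N, #{s : Fin N → Fin n | fingerprint s = φ} * ∏ i, p i ^ φ i =
        (∑ i, p i) ^ N := by
    have := sum_prod_mul_fingerprint (N := N) p fun _ ↦ 1
    simp only [mul_one] at this
    rw [← this, ← Fintype.prod_sum, prod_const, card_univ, Fintype.card_fin]
  have := eq_zero_of_sum_mul_prod_pow_eq_zero_on_stdSimplex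
    (fun φ ↦ (#{s : Fin N → Fin n | fingerprint s = φ} : ℝ) - Nat.multinomial univ φ)
    (fun p _ ↦ by simp [sub_mul, sum_sub_distrib, hpow, sum_pow_eq_sum_piAntidiag]) φ hφ
  exact_mod_cast sub_eq_zero.mp this

theorem sum_prod_mul_fingerprint_eq_sum_multinomial [Nonempty (Fin n)] (p : Fin n → ℝ)
    (V : (Fin n → ℕ) → ℝ) :
    ∑ s : Fin N → Fin n, (∏ j, p (s j)) * V (fingerprint s) =
      ∑ φ ∈ piAntidiag univ N, Nat.multinomial univ φ * V φ * ∏ i, p i ^ φ i := by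
  rw [sum_prod_mul_fingerprint]
  exact sum_congr rfl fun φ hφ ↦ by rw [card_fingerprint_eq_multinomial hφ]

end Fingerprint

theorem Nat.multinomial_mul_prod_choose {ι : Type*} (s : Finset ι) {φ α : ι → ℕ} (h : α ≤ φ) :
    multinomial s φ * (∏ i ∈ s, (φ i).choose (α i)) * (∏ i ∈ s, (α i).factorial) *
        (∑ i ∈ s, (φ - α) i).factorial = (∑ i ∈ s, φ i).factorial * multinomial s (φ - α) := by
  have hchoose : (∏ i ∈ s, (φ i).choose (α i)) * (∏ i ∈ s, (α i).factorial) *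
      ∏ i ∈ s, ((φ - α) i).factorial = ∏ i ∈ s, (φ i).factorial := by
    rw [← prod_mul_distrib, ← prod_mul_distrib]
    exact prod_congr rfl fun i _ ↦ Nat.choose_mul_factorial_mul_factorial (h i)
  rw [← multinomial_spec s φ, ← multinomial_spec s (φ - α), ← hchoose]
  ring

section Estimator

variable {ι : Type*} [Fintype ι]

noncomputable def monomialEstimator (N d : ℕ) (α φ : ι → ℕ) : ℝ :=
  ((N - d).factorial * ∏ i, ((α i).factorial : ℝ)) / N.factorial * ∏ i, ((φ i).choose (α i) : ℝ)

theorem multinomial_mul_monomialEstimator {φ α : ι → ℕ} {N d : ℕ} (hφ : ∑ i, φ i = N)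
    (hα : ∑ i, α i = d) :
    Nat.multinomial univ φ * monomialEstimator N d α φ =
      if ∀ i, α i ≤ φ i then (Nat.multinomial univ (φ - α) : ℝ) else 0 := by
  split_ifs with h
  · have hsum : ∑ i, (φ - α) i = N - d := by
      rw [← hφ, ← hα, ← sum_tsub_distrib _ fun i _ ↦ h i]
      rfl
    have key := Nat.multinomial_mul_prod_choose univ h
    rw [hsum, hφ] at key
    rw [monomialEstimator]
    field_simp
    have keyℝ := congrArg (Nat.cast : ℕ → ℝ) key
    push_cast at keyℝ
    linear_combination keyℝ
  · obtain ⟨i, hi⟩ : ∃ i, φ i < α i := by simpa using h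
    rw [monomialEstimator, prod_eq_zero (f := fun i ↦ ((φ i).choose (α i) : ℝ)) (mem_univ i)
      (by simp [Nat.choose_eq_zero_of_lt hi]), mul_zero, mul_zero]

theorem sum_piAntidiag_ite_le_mul_prod_pow [DecidableEq ι] {R : Type*} [CommSemiring R]
    (p : ι → R) {α : ι → ℕ} {N d : ℕ} (hα : ∑ i, α i = d) (hdN : d ≤ N) :
    ∑ φ ∈ piAntidiag univ N,
        (if ∀ i, α i ≤ φ i then (Nat.multinomial univ (φ - α) : R) else 0) * ∏ i, p i ^ φ i =
      (∏ i, p i ^ α i) * (∑ i, p i) ^ (N - d) := by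
  rw [sum_pow_eq_sum_piAntidiag, mul_sum]
  simp_rw [ite_mul, zero_mul]
  rw [← sum_filter]
  refine sum_nbij' (fun φ ↦ φ - α) (fun β ↦ α + β) ?_ ?_ ?_ ?_ ?_
  · intro φ hφ
    obtain ⟨hφN, hαφ⟩ := mem_filter.mp hφ
    refine mem_piAntidiag.mpr ⟨?_, fun i _ ↦ mem_univ i⟩
    rw [← (mem_piAntidiag.mp hφN).1, ← hα, ← sum_tsub_distrib _ fun i _ ↦ hαφ i]
    rfl
  · intro β hβ
    refine mem_filter.mpr ⟨mem_piAntidiag.mpr ⟨?_, fun i _ ↦ mem_univ i⟩, fun i ↦ ?_⟩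
    · simp only [Pi.add_apply, sum_add_distrib, hα, (mem_piAntidiag.mp hβ).1]
      omega
    · simp
  · intro φ hφ
    ext i
    simp [(mem_filter.mp hφ).2 i]
  · intro β _
    ext i
    simp
  · intro φ hφ
    rw [← mul_assoc, mul_comm _ (Nat.multinomial _ _ : R), mul_assoc, ← prod_mul_distrib]
    refine congrArg _ (prod_congr rfl fun i _ ↦ ?_)
    rw [← pow_add, Pi.sub_apply, Nat.add_sub_cancel' ((mem_filter.mp hφ).2 i)]

theorem sum_multinomial_mul_monomialEstimator_mul_prod_pow [DecidableEq ι] (p : ι → ℝ)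
    {α : ι → ℕ} {N d : ℕ} (hα : ∑ i, α i = d) (hdN : d ≤ N) :
    ∑ φ ∈ piAntidiag univ N, Nat.multinomial univ φ * monomialEstimator N d α φ * ∏ i, p i ^ φ i =
      (∏ i, p i ^ α i) * (∑ i, p i) ^ (N - d) := by
  rw [← sum_piAntidiag_ite_le_mul_prod_pow p hα hdN]
  exact sum_congr rfl fun φ hφ ↦ by
    rw [multinomial_mul_monomialEstimator (mem_piAntidiag.mp hφ).1 hα]

end Estimator

theorem estU_eq_sum_coeff_mul_monomialEstimator {n : ℕ} (N d : ℕ) (Q : MvPolynomial (Fin n) ℝ)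
    (φ : Fin n → ℕ) :
    estU N d Q φ = ∑ α ∈ Q.support, coeff α Q * monomialEstimator N d α φ := by
  simp only [estU, monomialEstimator, mul_div_assoc, mul_assoc]

theorem sum_multinomial_mul_estU_mul_prod_pow {n d N : ℕ} {Q : MvPolynomial (Fin n) ℝ}
    (hQ : Q.IsHomogeneous d) (hN : d ≤ N) (p : Fin n → ℝ) :
    ∑ φ ∈ piAntidiag univ N, Nat.multinomial univ φ * estU N d Q φ * ∏ i, p i ^ φ i =
      eval p Q * (∑ i, p i) ^ (N - d) := by
  have hdeg : ∀ α ∈ Q.support, ∑ i, α i = d := fun α hα ↦ by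
    rw [← Finsupp.degree_eq_sum, Finsupp.degree_apply, hQ.degree_eq_sum_deg_support hα]
  simp_rw [estU_eq_sum_coeff_mul_monomialEstimator, mul_sum, sum_mul]
  rw [sum_comm, eval_eq', sum_mul]
  refine sum_congr rfl fun α hα ↦ ?_
  rw [mul_assoc, ← sum_multinomial_mul_monomialEstimator_mul_prod_pow p (hdeg α hα) hN, mul_sum]
  exact sum_congr rfl fun φ _ ↦ by ring

theorem stmt11 {n : ℕ} (hn : 1 ≤ n) (d N : ℕ) (hN : d ≤ N)
    (Q : MvPolynomial (Fin n) ℝ) (hQ : Q.IsHomogeneous d)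
    (V : (Fin n → ℕ) → ℝ)
    (hV : ∀ p : Fin n → ℝ, (∀ i, 0 ≤ p i) → ∑ i, p i = 1 →
      ∑ s : Fin N → Fin n, (∏ j, p (s j)) * V (fingerprint s)
        = MvPolynomial.eval p Q) :
    ∀ φ : Fin n → ℕ, ∑ i, φ i = N → V φ = estU N d Q φ := by
  have : Nonempty (Fin n) := ⟨⟨0, hn⟩⟩
  have hcoeff : ∀ p ∈ stdSimplex ℝ (Fin n), ∑ φ ∈ piAntidiag univ N,
      (Nat.multinomial univ φ * V φ - Nat.multinomial univ φ * estU N d Q φ) *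
        ∏ i, p i ^ φ i = 0 := by
    rintro p ⟨hp, hp1⟩
    have hU := sum_multinomial_mul_estU_mul_prod_pow hQ hN p
    rw [hp1, one_pow, mul_one, ← hV p hp hp1, sum_prod_mul_fingerprint_eq_sum_multinomial] at hU
    simp_rw [sub_mul, sum_sub_distrib, hU, sub_self]
  intro φ hφ
  have hmul := sub_eq_zero.mp <| eq_zero_of_sum_mul_prod_pow_eq_zero_on_stdSimplex _ hcoeff φ
    (mem_piAntidiag.mpr ⟨hφ, fun i _ ↦ mem_univ i⟩)
  exact mul_left_cancel₀ (Nat.cast_ne_zero.mpr (Nat.multinomial_pos _ _).ne') hmul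
end

section
/- Let n ≥ 1 and let Q ∈ ℝ[X_1,…,X_n] be a homogeneous polynomial of degree d such that the polynomial X_1 + ⋯ + X_n does not divide Q, and let N < d. Then there exists no function V : ℕⁿ → ℝ such that for every probability distribution p on [n], E[V(Φ)] = Q(p_1,…,p_n), where Φ is the fingerprint of an N-sample from p. (That is, Q(p) admits no unbiased estimator from fewer than d samples.) -/
/-!
An estimator `V` from `N` samples has expectation `eval p R`, where `R` is a homogeneous polynomial
of degree `N`. If this equals `Q(p)` on the simplex, then by homogeneity `Q` and
`(X₁ + ⋯ + Xₙ)^(d - N) * R` agree on the whole positive orthant (rescale a positive vector onto the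
simplex), hence are equal as polynomials; for `N < d` this makes `X₁ + ⋯ + Xₙ` divide `Q`.
-/

open Finset

namespace MvPolynomial

variable {σ R : Type*} [CommSemiring R]

theorem IsHomogeneous.eval_smul {φ : MvPolynomial σ R} {m : ℕ}
    (hφ : φ.IsHomogeneous m) (c : R) (x : σ → R) :
    eval (c • x) φ = c ^ m * eval x φ := by
  rw [eval_eq, eval_eq, mul_sum]
  refine sum_congr rfl fun e he => ?_
  simp only [Pi.smul_apply, smul_eq_mul, mul_pow, prod_mul_distrib, prod_pow_eq_pow_sum,
    ← hφ.degree_eq_sum_deg_support he]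
  ring

noncomputable def expectationPoly [Fintype σ] (N : ℕ) (f : (Fin N → σ) → R) :
    MvPolynomial σ R :=
  ∑ s, C (f s) * ∏ j, X (s j)

variable [Fintype σ] {N : ℕ}

theorem eval_expectationPoly (f : (Fin N → σ) → R) (p : σ → R) :
    eval p (expectationPoly N f) = ∑ s, (∏ j, p (s j)) * f s := by
  simp [expectationPoly, mul_comm]

theorem isHomogeneous_expectationPoly (f : (Fin N → σ) → R) :
    (expectationPoly N f).IsHomogeneous N := by
  refine IsHomogeneous.sum _ _ _ fun s _ => ?_
  simpa using (IsHomogeneous.prod univ (fun j => X (s j)) (fun _ => 1)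
    fun j _ => isHomogeneous_X R (s j)).C_mul (f s)

end MvPolynomial

open MvPolynomial

theorem eq_sum_X_pow_mul_of_eval_eq_on_simplex {σ : Type*} [Fintype σ] [Nonempty σ]
    {P Q : MvPolynomial σ ℝ} {N d : ℕ} (hNd : N ≤ d) (hP : P.IsHomogeneous N)
    (hQ : Q.IsHomogeneous d)
    (h : ∀ p : σ → ℝ, (∀ i, 0 ≤ p i) → ∑ i, p i = 1 → eval p P = eval p Q) :
    Q = (∑ i, X i) ^ (d - N) * P := by
  refine funext_set (fun _ => Set.Ioi 0) (fun _ => Set.Ioi_infinite 0) fun y hy_mem => ?_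
  have hy : ∀ i, 0 < y i := fun i => hy_mem i (Set.mem_univ i)
  set t := ∑ i, y i
  have ht : 0 < t := sum_pos (fun i _ => hy i) univ_nonempty
  set p := t⁻¹ • y
  have hp : ∀ i, 0 ≤ p i := fun i => smul_nonneg (inv_nonneg.2 ht.le) (hy i).le
  have hp1 : ∑ i, p i = 1 := by
    simp only [p, Pi.smul_apply, smul_eq_mul, ← mul_sum]
    exact inv_mul_cancel₀ ht.ne'
  have hy_eq : t • p = y := smul_inv_smul₀ ht.ne' y
  calc eval y Q = t ^ d * eval p Q := by rw [← hy_eq, hQ.eval_smul]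
    _ = t ^ (d - N) * (t ^ N * eval p P) := by
      rw [h p hp hp1, ← mul_assoc, ← pow_add, Nat.sub_add_cancel hNd]
    _ = eval y ((∑ i, X i) ^ (d - N) * P) := by
      rw [← hP.eval_smul, hy_eq]
      simp [t]

theorem stmt13 {n : ℕ} (hn : 1 ≤ n) (d N : ℕ) (hN : N < d)
    (Q : MvPolynomial (Fin n) ℝ) (hQ : Q.IsHomogeneous d)
    (hdvd : ¬ (∑ i : Fin n, MvPolynomial.X i) ∣ Q) :
    ¬ ∃ V : (Fin n → ℕ) → ℝ, ∀ p : Fin n → ℝ, (∀ i, 0 ≤ p i) → ∑ i, p i = 1 →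
      ∑ s : Fin N → Fin n, (∏ j, p (s j)) * V (fingerprint s)
        = MvPolynomial.eval p Q := by
  rintro ⟨V, hV⟩
  have : Nonempty (Fin n) := ⟨⟨0, hn⟩⟩
  have hQ_eq := eq_sum_X_pow_mul_of_eval_eq_on_simplex hN.le
    (isHomogeneous_expectationPoly fun s => V (fingerprint s)) hQ
    fun p hp hp1 => (eval_expectationPoly _ p).trans (hV p hp hp1)
  exact hdvd (hQ_eq ▸ dvd_mul_of_dvd_left (dvd_pow_self _ (Nat.sub_ne_zero_of_lt hN)) _)
end

section
/- Let Q ∈ ℝ[X_1,…,X_n] be homogeneous of degree d, written Q = ∑_{|α|=d} c_α X^α, and let Q⁺ := ∑_{|α|=d} |c_α| X^α. Then for every g ∈ ℕ and every x ∈ ℝⁿ with x_i ≥ 0 for all i: ∑_{s ∈ ℕⁿ, g ≤ |s| ≤ d} (1/∏_{i=1}^n s_i!) · x^s · | (∂^{|s|}Q/∂X^s)(x) | ≤ 2^d · Q⁺(x). -/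
/-!
Expanding `Q = ∑ c_α X^α`, the `s`-th Taylor term `x^s ∂^s Q(x) / s!` equals
`∑ c_α ∏ᵢ C(α_i, s_i) x_i^{α_i}`. For `x ≥ 0` its absolute value is therefore at most
`∑ |c_α| ∏ᵢ C(α_i, s_i) x_i^{α_i}`, and summing over all `s` with `s_i ≤ d` gives
`∑ |c_α| ∏ᵢ 2^{α_i} x_i^{α_i} = 2^d Q⁺(x)` by homogeneity.
-/

open Finset

/-- The iterated formal partial derivative `∏ i (∂/∂X_i)^(s i)` applied to `Q`. -/
noncomputable def iterPderiv {n : ℕ} (s : Fin n → ℕ)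
    (Q : MvPolynomial (Fin n) ℝ) : MvPolynomial (Fin n) ℝ :=
  (List.finRange n).foldr
    (fun i acc => (((MvPolynomial.pderiv i).toLinearMap) ^ (s i)) acc) Q

open MvPolynomial

section PowPderiv

variable {σ R : Type*} [CommSemiring R]

theorem pow_pderiv_monomial (i : σ) (k : ℕ) (α : σ →₀ ℕ) (c : R) :
    ((pderiv i).toLinearMap ^ k) (monomial α c)
      = monomial (α - Finsupp.single i k) (c * (α i).descFactorial k) := by
  induction k with
  | zero => simp
  | succ k ih =>
    have hαi : (α - Finsupp.single i k) i = α i - k := by simp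
    have hsub : α - Finsupp.single i k - Finsupp.single i 1 = α - Finsupp.single i (k + 1) := by
      rw [tsub_tsub, ← Finsupp.single_add]
    rw [pow_succ', Module.End.mul_apply, ih, Derivation.coeFn_coe, pderiv_monomial, hαi,
      hsub, mul_assoc, ← Nat.cast_mul, mul_comm ((α i).descFactorial k),
      ← Nat.descFactorial_succ]

theorem foldr_pow_pderiv_sum {ι : Type*} (s : σ → ℕ) (l : List σ) (S : Finset ι)
    (p : ι → MvPolynomial σ R) :
    l.foldr (fun i acc => ((pderiv i).toLinearMap ^ s i) acc) (∑ a ∈ S, p a)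
      = ∑ a ∈ S, l.foldr (fun i acc => ((pderiv i).toLinearMap ^ s i) acc) (p a) := by
  induction l with
  | nil => rfl
  | cons i l ih => simp only [List.foldr_cons, ih, map_sum]

theorem foldr_pow_pderiv_monomial [DecidableEq σ] (s : σ → ℕ) {l : List σ} (hl : l.Nodup)
    (α : σ →₀ ℕ) (c : R) :
    l.foldr (fun i acc => ((pderiv i).toLinearMap ^ s i) acc) (monomial α c)
      = monomial (α - ∑ i ∈ l.toFinset, Finsupp.single i (s i))
          (c * ∏ i ∈ l.toFinset, ((α i).descFactorial (s i) : R)) := by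
  induction l with
  | nil => simp
  | cons j l ih =>
    rw [List.nodup_cons] at hl
    have hj : j ∉ l.toFinset := by simpa using hl.1
    have hαj : (α - ∑ i ∈ l.toFinset, Finsupp.single i (s i)) j = α j := by
      rw [Finsupp.tsub_apply, Finsupp.finsetSum_apply,
        sum_eq_zero fun i hi => Finsupp.single_eq_of_ne (by rintro rfl; exact hj hi), tsub_zero]
    rw [List.foldr_cons, ih hl.2, pow_pderiv_monomial, hαj, List.toFinset_cons, sum_insert hj,
      prod_insert hj, tsub_tsub, add_comm (Finsupp.single j (s j)), mul_assoc,
      mul_comm (∏ i ∈ l.toFinset, _)]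

end PowPderiv

theorem eval_iterPderiv {n : ℕ} (s : Fin n → ℕ) (Q : MvPolynomial (Fin n) ℝ)
    (x : Fin n → ℝ) :
    eval x (iterPderiv s Q)
      = ∑ α ∈ Q.support, Q.coeff α * (∏ i, ((α i).descFactorial (s i) : ℝ))
          * ∏ i, x i ^ (α i - s i) := by
  have hsub (α : Fin n →₀ ℕ) (i : Fin n) :
      (α - ∑ j, Finsupp.single j (s j)) i = α i - s i := by
    simp [Finsupp.tsub_apply, Finsupp.finsetSum_apply, Finsupp.single_apply]
  conv_lhs => rw [iterPderiv, ← Q.support_sum_monomial_coeff]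
  rw [foldr_pow_pderiv_sum, map_sum]
  refine sum_congr rfl fun α _ => ?_
  rw [foldr_pow_pderiv_monomial s (List.nodup_finRange n), List.toFinset_finRange, eval_monomial,
    Finsupp.prod_pow]
  simp only [hsub]

theorem inv_factorial_mul_pow_mul_descFactorial_mul_pow_sub {K : Type*} [Field K] [CharZero K]
    (m k : ℕ) (y : K) :
    (k.factorial : K)⁻¹ * y ^ k * ((m.descFactorial k : K) * y ^ (m - k))
      = m.choose k * y ^ m := by
  rcases le_or_gt k m with h | h
  · rw [Nat.descFactorial_eq_factorial_mul_choose, Nat.cast_mul,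
      show (k.factorial : K)⁻¹ * y ^ k * (k.factorial * m.choose k * y ^ (m - k))
        = (k.factorial : K)⁻¹ * k.factorial * (m.choose k * (y ^ k * y ^ (m - k))) by ring,
      inv_mul_cancel₀ (by exact_mod_cast k.factorial_ne_zero), one_mul, ← pow_add,
      Nat.add_sub_cancel' h]
  · simp [Nat.descFactorial_eq_zero_iff_lt.2 h, Nat.choose_eq_zero_of_lt h]

theorem taylor_term_eq_sum_choose {n : ℕ} (s : Fin n → ℕ) (Q : MvPolynomial (Fin n) ℝ)
    (x : Fin n → ℝ) :
    (1 / ∏ i, ((s i).factorial : ℝ)) * (∏ i, x i ^ s i) * eval x (iterPderiv s Q)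
      = ∑ α ∈ Q.support, Q.coeff α * ∏ i, ((α i).choose (s i) * x i ^ α i) := by
  rw [eval_iterPderiv, mul_sum]
  refine sum_congr rfl fun α _ => ?_
  simp only [← inv_factorial_mul_pow_mul_descFactorial_mul_pow_sub, prod_mul_distrib, one_div,
    prod_inv_distrib]
  ring

theorem taylor_term_abs_le {n : ℕ} (s : Fin n → ℕ) (Q : MvPolynomial (Fin n) ℝ)
    {x : Fin n → ℝ} (hx : ∀ i, 0 ≤ x i) :
    (1 / ∏ i, ((s i).factorial : ℝ)) * (∏ i, x i ^ s i) * |eval x (iterPderiv s Q)|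
      ≤ ∑ α ∈ Q.support, |Q.coeff α| * ∏ i, ((α i).choose (s i) * x i ^ α i) := by
  have hpre : 0 ≤ (1 / ∏ i, ((s i).factorial : ℝ)) * ∏ i, x i ^ s i :=
    mul_nonneg (by positivity) (prod_nonneg fun i _ => pow_nonneg (hx i) _)
  rw [← abs_of_nonneg hpre, ← abs_mul, taylor_term_eq_sum_choose]
  refine (abs_sum_le_sum_abs _ _).trans_eq (sum_congr rfl fun α _ => ?_)
  rw [abs_mul, abs_of_nonneg (prod_nonneg fun i _ => mul_nonneg (Nat.cast_nonneg _)
    (pow_nonneg (hx i) _))]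

theorem sum_fin_choose_eq_two_pow {R : Type*} [CommSemiring R] {m d : ℕ} (h : m ≤ d) :
    ∑ k : Fin (d + 1), (m.choose k : R) = 2 ^ m := by
  rw [Fin.sum_univ_eq_sum_range (fun k => (m.choose k : R)), ← Nat.cast_sum,
    ← sum_subset (range_subset_range.2 (Nat.succ_le_succ h))
      fun k _ hk => Nat.choose_eq_zero_of_lt (by simpa using hk),
    Nat.sum_range_choose, Nat.cast_pow, Nat.cast_ofNat]

theorem sum_pi_fin_prod_choose_eq_two_pow {ι R : Type*} [Fintype ι] [DecidableEq ι]
    [CommSemiring R] {a : ι → ℕ} {d : ℕ} (h : ∀ i, a i ≤ d) :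
    ∑ t : ι → Fin (d + 1), ∏ i, ((a i).choose (t i) : R) = 2 ^ ∑ i, a i := by
  rw [← prod_pow_eq_pow_sum,
    ← prod_congr rfl fun i _ => sum_fin_choose_eq_two_pow (R := R) (h i), prod_univ_sum,
    Fintype.piFinset_univ]

theorem MvPolynomial.IsHomogeneous.sum_eq_of_mem_support {σ R : Type*} [Fintype σ]
    [CommSemiring R] {Q : MvPolynomial σ R} {d : ℕ} (hQ : Q.IsHomogeneous d)
    {α : σ →₀ ℕ} (hα : α ∈ Q.support) : ∑ i, α i = d := by
  rw [← Finsupp.degree_eq_sum, Finsupp.degree_eq_weight_one]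
  exact hQ (mem_support_iff.mp hα)

theorem stmt17 {n : ℕ} (d : ℕ) (Q : MvPolynomial (Fin n) ℝ) (hQ : Q.IsHomogeneous d)
    (g : ℕ) (x : Fin n → ℝ) (hx : ∀ i, 0 ≤ x i) :
    (∑ t : Fin n → Fin (d + 1),
        if g ≤ ∑ i, (t i : ℕ) ∧ ∑ i, (t i : ℕ) ≤ d then
          (1 / ∏ i, (((t i : ℕ)).factorial : ℝ)) * (∏ i, x i ^ (t i : ℕ)) *
            |MvPolynomial.eval x (iterPderiv (fun i => (t i : ℕ)) Q)|
        else 0)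
    ≤ 2 ^ d * ∑ α ∈ Q.support, |Q.coeff α| * ∏ i, x i ^ α i := by
  calc
    _ ≤ ∑ t : Fin n → Fin (d + 1), ∑ α ∈ Q.support,
          |Q.coeff α| * ∏ i, ((α i).choose (t i) * x i ^ α i) := by
      refine sum_le_sum fun t _ => ?_
      split_ifs
      · exact taylor_term_abs_le (fun i => (t i : ℕ)) Q hx
      · exact sum_nonneg fun α _ => mul_nonneg (abs_nonneg _)
          (prod_nonneg fun i _ => mul_nonneg (Nat.cast_nonneg _) (pow_nonneg (hx i) _))
    _ = ∑ α ∈ Q.support, |Q.coeff α| * (∑ t : Fin n → Fin (d + 1),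
          ∏ i, ((α i).choose (t i) : ℝ)) * ∏ i, x i ^ α i := by
      rw [sum_comm]
      simp only [prod_mul_distrib, ← mul_sum, ← sum_mul, mul_assoc]
    _ = 2 ^ d * ∑ α ∈ Q.support, |Q.coeff α| * ∏ i, x i ^ α i := by
      rw [mul_sum]
      refine sum_congr rfl fun α hα => ?_
      have hαd (i : Fin n) : α i ≤ d := hQ.sum_eq_of_mem_support hα ▸ single_le_sum
        (fun j _ => Nat.zero_le (α j)) (mem_univ i)
      rw [sum_pi_fin_prod_choose_eq_two_pow hαd, hQ.sum_eq_of_mem_support hα]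
      ring
end

section
/- Let ℓ₁, ℓ₂ ≥ 1 and let p be a probability distribution on [ℓ₁] × [ℓ₂], with marginals p_X(i) := ∑_{j} p(i,j) and p_Y(j) := ∑_{i} p(i,j). Then ∑_{i=1}^{ℓ₁} ∑_{j=1}^{ℓ₂} ( p(i,j) · ∑_{i'≠i} ∑_{j'≠j} p(i',j') − ( ∑_{i'≠i} p(i',j) ) · ( ∑_{j'≠j} p(i,j') ) )² = ∑_{i=1}^{ℓ₁} ∑_{j=1}^{ℓ₂} ( p(i,j) − p_X(i)·p_Y(j) )². (That is, the degree-4 polynomial Q from the L2-distance estimator satisfies Q(p) = ‖p − p_X ⊗ p_Y‖₂².) -/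
/-! The two sides agree summand by summand. Split the mass of `p` around the cell `(i, j)` into
`a = p (i, j)`, the rest `b` of column `j`, the rest `c` of row `i`, and the off-diagonal block `d`.
Then `a d - b c = a (a + b + c + d) - (a + c) (a + b)`, and `a + b + c + d = 1`. -/

open Finset

variable {α β : Type*} [Fintype α] [Fintype β] [DecidableEq α] [DecidableEq β]

theorem Fintype.sum_prod_eq_add_sum_erase {M : Type*} [AddCommMonoid M] (p : α × β → M)
    (i : α) (j : β) :
    ∑ ω, p ω = p (i, j) + ∑ j' ∈ univ.erase j, p (i, j') + ∑ i' ∈ univ.erase i, p (i', j)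
      + ∑ i' ∈ univ.erase i, ∑ j' ∈ univ.erase j, p (i', j') := by
  simp only [Fintype.sum_prod_type, ← add_sum_erase univ _ (mem_univ i),
    ← add_sum_erase univ _ (mem_univ j), sum_add_distrib, add_assoc]

theorem mul_sum_erase_sub_sum_erase_mul {R : Type*} [CommRing R] (p : α × β → R)
    (i : α) (j : β) :
    p (i, j) * ∑ i' ∈ univ.erase i, ∑ j' ∈ univ.erase j, p (i', j')
        - (∑ i' ∈ univ.erase i, p (i', j)) * ∑ j' ∈ univ.erase j, p (i, j')
      = p (i, j) * ∑ ω, p ω - (∑ j', p (i, j')) * ∑ i', p (i', j) := by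
  rw [Fintype.sum_prod_eq_add_sum_erase p i j, ← add_sum_erase univ _ (mem_univ i),
    ← add_sum_erase univ _ (mem_univ j)]
  ring

theorem stmt18_general (l1 l2 : ℕ)
    (p : Fin l1 × Fin l2 → ℝ) (hp1 : ∑ ω, p ω = 1) :
    ∑ i, ∑ j,
      (p (i, j) * (∑ i' ∈ Finset.univ.erase i, ∑ j' ∈ Finset.univ.erase j, p (i', j'))
        - (∑ i' ∈ Finset.univ.erase i, p (i', j)) *
          (∑ j' ∈ Finset.univ.erase j, p (i, j'))) ^ 2
    = ∑ i, ∑ j, (p (i, j) - (∑ j', p (i, j')) * (∑ i', p (i', j))) ^ 2 := by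
  simp only [mul_sum_erase_sub_sum_erase_mul, hp1, mul_one]

theorem stmt18 (l1 l2 : ℕ) (h1 : 1 ≤ l1) (h2 : 1 ≤ l2)
    (p : Fin l1 × Fin l2 → ℝ) (hp0 : ∀ ω, 0 ≤ p ω) (hp1 : ∑ ω, p ω = 1) :
    ∑ i, ∑ j,
      (p (i, j) * (∑ i' ∈ Finset.univ.erase i, ∑ j' ∈ Finset.univ.erase j, p (i', j'))
        - (∑ i' ∈ Finset.univ.erase i, p (i', j)) *
          (∑ j' ∈ Finset.univ.erase j, p (i, j'))) ^ 2
    = ∑ i, ∑ j, (p (i, j) - (∑ j', p (i, j')) * (∑ i', p (i', j))) ^ 2 :=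
  stmt18_general l1 l2 p hp1
end

section
/- Define the following five vectors in ℝ⁴ (listed as the entries (x₁,x₂,x₃,x₄)): Y₁ = (16,24,24,36)/100, Y₂ = (36,24,24,16)/100, N₁ = (6,24,24,46)/100, N₂ = (46,24,24,6)/100, N₃ = (26,24,24,26)/100. Then for every polynomial R ∈ ℝ[X₁,X₂,X₃,X₄] of total degree at most 3: (1/8)·R(N₁) + (1/8)·R(N₂) + (3/4)·R(N₃) = (1/2)·R(Y₁) + (1/2)·R(Y₂). -/
lemma key (a b c e : ℕ) (h : a + b + c + e ≤ 3) :
    (1/8 : ℝ) * ((6/100)^a * ((24/100)^b * ((24/100)^c * ((46/100)^e * 1))))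
      + (1/8) * ((46/100)^a * ((24/100)^b * ((24/100)^c * ((6/100)^e * 1))))
      + (3/4) * ((26/100)^a * ((24/100)^b * ((24/100)^c * ((26/100)^e * 1))))
    = (1/2) * ((16/100)^a * ((24/100)^b * ((24/100)^c * ((36/100)^e * 1))))
      + (1/2) * ((36/100)^a * ((24/100)^b * ((24/100)^c * ((16/100)^e * 1)))) := by
  have ha : a ≤ 3 := by omega
  have he : e ≤ 3 := by omega
  interval_cases a <;> interval_cases e <;> first
    | (exfalso; omega)
    | (ring_nf; try norm_num)

theorem stmt19 (R : MvPolynomial (Fin 4) ℝ) (hR : R.totalDegree ≤ 3) :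
    (1 / 8) * MvPolynomial.eval ![6/100, 24/100, 24/100, 46/100] R
      + (1 / 8) * MvPolynomial.eval ![46/100, 24/100, 24/100, 6/100] R
      + (3 / 4) * MvPolynomial.eval ![26/100, 24/100, 24/100, 26/100] R
    = (1 / 2) * MvPolynomial.eval ![16/100, 24/100, 24/100, 36/100] R
      + (1 / 2) * MvPolynomial.eval ![36/100, 24/100, 24/100, 16/100] R := by
  simp only [MvPolynomial.eval_eq', Finset.mul_sum]
  rw [← Finset.sum_add_distrib, ← Finset.sum_add_distrib, ← Finset.sum_add_distrib]
  apply Finset.sum_congr rfl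
  intro d hd
  have hdeg : d 0 + d 1 + d 2 + d 3 ≤ 3 := by
    have := MvPolynomial.le_totalDegree hd
    have h2 : d.sum (fun _ n => n) = d 0 + d 1 + d 2 + d 3 := by
      rw [Finsupp.sum_fintype _ _ (fun _ => rfl), Fin.sum_univ_four]
    omega
  simp only [Fin.prod_univ_four]
  have := key (d 0) (d 1) (d 2) (d 3) hdeg
  simp only [Matrix.cons_val_zero, Matrix.cons_val_one, Matrix.head_cons,
    Matrix.cons_val_two, Matrix.tail_cons, Matrix.cons_val_three]
  linear_combination (MvPolynomial.coeff d R) * this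
end
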